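/- arXiv:2602.13700 — 10 statements merged into one kernel-verified Lean document; each statement's English description precedes it below -/
import Mathlib

section
/- Let T be a positive integer, let λ > 0, and let x_1, …, x_T be real numbers with 0 ≤ x_t ≤ λ for all t. Define S_t = λ + Σ_{k=1}^{t-1} x_k. Then Σ_{t=1}^T x_t / S_t ≤ 2 log(T + 1). -/
lemma half_le_log_one_add {u : ℝ} (hu0 : 0 ≤ u) (hu1 : u ≤ 1) :
    u ≤ 2 * Real.log (1 + u) := by
  have h1 : -(u/2) + 1 ≤ Real.exp (-(u/2)) := Real.add_one_le_exp _
  have h2 : Real.exp (u/2) * Real.exp (-(u/2)) = 1 := by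
    rw [← Real.exp_add]; simp
  have h3 : Real.exp (u/2) > 0 := Real.exp_pos _
  have key : Real.exp (u/2) ≤ 1 + u := by nlinarith [Real.exp_pos (-(u/2))]
  have h4 : u / 2 ≤ Real.log (1 + u) := by
    have := Real.log_le_log (Real.exp_pos (u/2)) key
    rwa [Real.log_exp] at this
  linarith

lemma log_sums_aux (lam : ℝ) (hlam : 0 < lam) (x : ℕ → ℝ)
    (hx : ∀ t, 0 ≤ x t ∧ x t ≤ lam) (T : ℕ) :
    ∑ t ∈ Finset.Icc 1 T, x t / (lam + ∑ k ∈ Finset.Icc 1 (t - 1), x k)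
      ≤ 2 * (Real.log (lam + ∑ k ∈ Finset.Icc 1 T, x k) - Real.log lam) := by
  induction T with
  | zero => simp
  | succ T ih =>
    have hins : Finset.Icc 1 (T + 1) = insert (T + 1) (Finset.Icc 1 T) := by
      ext k; simp [Finset.mem_Icc]; omega
    have hnotmem : T + 1 ∉ Finset.Icc 1 T := by simp
    set S : ℝ := lam + ∑ k ∈ Finset.Icc 1 T, x k with hS
    have hsum_nonneg : 0 ≤ ∑ k ∈ Finset.Icc 1 T, x k :=
      Finset.sum_nonneg fun k _ => (hx k).1
    have hSpos : 0 < S := by positivity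
    have hxT : 0 ≤ x (T + 1) ∧ x (T + 1) ≤ lam := hx (T + 1)
    have hxle : x (T + 1) ≤ S := le_trans hxT.2 (by linarith)
    have hu0 : 0 ≤ x (T + 1) / S := div_nonneg hxT.1 hSpos.le
    have hu1 : x (T + 1) / S ≤ 1 := (div_le_one hSpos).2 hxle
    have hkey : x (T + 1) / S ≤ 2 * (Real.log (S + x (T + 1)) - Real.log S) := by
      have := half_le_log_one_add hu0 hu1
      have heq : 1 + x (T + 1) / S = (S + x (T + 1)) / S := by
        field_simp
      rw [heq, Real.log_div (ne_of_gt (by linarith)) (ne_of_gt hSpos)] at this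
      linarith
    rw [hins, Finset.sum_insert hnotmem, Finset.sum_insert hnotmem]
    have hTsub : (T + 1) - 1 = T := by omega
    rw [hTsub]
    have : Real.log (lam + (x (T + 1) + ∑ k ∈ Finset.Icc 1 T, x k))
        = Real.log (S + x (T + 1)) := by congr 1; rw [hS]; ring
    rw [this]
    calc x (T + 1) / S + ∑ t ∈ Finset.Icc 1 T, x t / (lam + ∑ k ∈ Finset.Icc 1 (t - 1), x k)
        ≤ 2 * (Real.log (S + x (T + 1)) - Real.log S)
          + 2 * (Real.log S - Real.log lam) := add_le_add hkey ih
      _ = 2 * (Real.log (S + x (T + 1)) - Real.log lam) := by ring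

/-- Lemma C.1 (log sums): for `x_t ∈ [0, λ]` and `S_t = λ + Σ_{k=1}^{t-1} x_k`,
`Σ_{t=1}^T x_t / S_t ≤ 2 log (T + 1)`. -/
theorem log_sums (T : ℕ) (hT : 0 < T) (lam : ℝ) (hlam : 0 < lam)
    (x : ℕ → ℝ) (hx : ∀ t ∈ Finset.Icc 1 T, 0 ≤ x t ∧ x t ≤ lam) :
    ∑ t ∈ Finset.Icc 1 T, x t / (lam + ∑ k ∈ Finset.Icc 1 (t - 1), x k)
      ≤ 2 * Real.log (T + 1) := by
  set y : ℕ → ℝ := fun t => if t ∈ Finset.Icc 1 T then x t else 0 with hy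
  have hy' : ∀ t, 0 ≤ y t ∧ y t ≤ lam := by
    intro t
    simp only [hy]
    split_ifs with h
    · exact hx t h
    · exact ⟨le_refl 0, hlam.le⟩
  have hagree : ∀ s : Finset ℕ, s ⊆ Finset.Icc 1 T →
      ∑ k ∈ s, y k = ∑ k ∈ s, x k := by
    intro s hs
    apply Finset.sum_congr rfl
    intro k hk
    simp only [hy, if_pos (hs hk)]
  have hLHS : ∑ t ∈ Finset.Icc 1 T, x t / (lam + ∑ k ∈ Finset.Icc 1 (t - 1), x k)
      = ∑ t ∈ Finset.Icc 1 T, y t / (lam + ∑ k ∈ Finset.Icc 1 (t - 1), y k) := by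
    apply Finset.sum_congr rfl
    intro t ht
    have ht' := Finset.mem_Icc.mp ht
    have hsub : Finset.Icc 1 (t - 1) ⊆ Finset.Icc 1 T := by
      apply Finset.Icc_subset_Icc le_rfl; omega
    rw [hagree _ hsub]
    simp only [hy, if_pos ht]
  rw [hLHS]
  have hmain := log_sums_aux lam hlam y hy' T
  have hsum_le : ∑ k ∈ Finset.Icc 1 T, y k ≤ T * lam := by
    calc ∑ k ∈ Finset.Icc 1 T, y k ≤ ∑ k ∈ Finset.Icc 1 T, lam :=
          Finset.sum_le_sum fun k _ => (hy' k).2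
      _ = T * lam := by
          rw [Finset.sum_const, Nat.card_Icc]
          simp [nsmul_eq_mul]
  have hsum_nonneg : 0 ≤ ∑ k ∈ Finset.Icc 1 T, y k :=
    Finset.sum_nonneg fun k _ => (hy' k).1
  have hlog : Real.log (lam + ∑ k ∈ Finset.Icc 1 T, y k) - Real.log lam
      ≤ Real.log (T + 1) := by
    rw [← Real.log_div (by positivity) (ne_of_gt hlam)]
    apply Real.log_le_log (by positivity)
    rw [div_le_iff₀ hlam]
    have : ((T : ℝ) + 1) * lam = lam + T * lam := by ring
    linarith
  linarith
end

section
/- Let A be a nonempty finite set, let K be a positive integer, and for each k ∈ {1, …, K} let π_k : A → [0,1] satisfy Σ_{a ∈ A} π_k(a) = 1. Then Σ_{a ∈ A} Σ_{k=1}^K π_k(a) / (1 + Σ_{i=1}^{k-1} π_i(a)) ≤ 2 |A| log(K + 1). -/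
lemma aux_log_bound (x s : ℝ) (hx0 : 0 ≤ x) (hx1 : x ≤ 1) (hs : 0 ≤ s) :
    x / (1 + s) ≤ 2 * (Real.log (1 + s + x) - Real.log (1 + s)) := by
  have h1 : (0:ℝ) < 1 + s := by linarith
  have h2 : (0:ℝ) < 1 + s + x := by linarith
  have hlog : Real.log (1+s+x) - Real.log (1+s) = Real.log ((1+s+x)/(1+s)) :=
    (Real.log_div h2.ne' h1.ne').symm
  rw [hlog]
  have hy : (0:ℝ) < (1+s+x)/(1+s) := div_pos h2 h1
  have hlb : 1 - ((1+s+x)/(1+s))⁻¹ ≤ Real.log ((1+s+x)/(1+s)) := by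
    have h := Real.add_one_le_exp (-Real.log ((1+s+x)/(1+s)))
    rw [Real.exp_neg, Real.exp_log hy] at h
    linarith
  rw [inv_div] at hlb
  have heq : 1 - (1+s)/(1+s+x) = x/(1+s+x) := by
    field_simp
    ring
  rw [heq] at hlb
  have hmid : x/(1+s) ≤ 2*(x/(1+s+x)) := by
    rw [mul_div_assoc', div_le_div_iff₀ h1 h2]
    nlinarith
  linarith

/-- For probability vectors `π_1, …, π_K` on a nonempty finite set `A`,
`Σ_{a} Σ_{k=1}^K π_k(a) / (1 + Σ_{i=1}^{k-1} π_i(a)) ≤ 2 |A| log (K + 1)`. -/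
theorem sum_prob_ratio_le {A : Type*} [Fintype A] [Nonempty A] (K : ℕ) (hK : 0 < K)
    (π : ℕ → A → ℝ)
    (hπ01 : ∀ k ∈ Finset.Icc 1 K, ∀ a, 0 ≤ π k a ∧ π k a ≤ 1)
    (hπsum : ∀ k ∈ Finset.Icc 1 K, ∑ a, π k a = 1) :
    ∑ a, ∑ k ∈ Finset.Icc 1 K, π k a / (1 + ∑ i ∈ Finset.Icc 1 (k - 1), π i a)
      ≤ 2 * (Fintype.card A) * Real.log (K + 1) := by
  have per_a : ∀ a : A, ∑ k ∈ Finset.Icc 1 K, π k a / (1 + ∑ i ∈ Finset.Icc 1 (k - 1), π i a)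
      ≤ 2 * Real.log (K + 1) := by
    intro a
    set T : ℕ → ℝ := fun n => ∑ i ∈ Finset.Icc 1 n, π i a with hT
    have hTnn : ∀ n, n ≤ K → 0 ≤ T n := by
      intro n hn
      apply Finset.sum_nonneg
      intro i hi
      simp only [Finset.mem_Icc] at hi
      exact (hπ01 i (Finset.mem_Icc.mpr ⟨hi.1, hi.2.trans hn⟩) a).1
    have hstep : ∀ i, T (i+1) = T i + π (i+1) a := by
      intro i
      exact Finset.sum_Icc_succ_top (by omega) _
    have hsum_eq : ∑ k ∈ Finset.Icc 1 K, π k a / (1 + T (k - 1))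
        = ∑ i ∈ Finset.range K, π (i+1) a / (1 + T i) := by
      rw [show Finset.Icc 1 K = Finset.Ico 1 (K+1) by rw [Finset.Ico_add_one_right_eq_Icc],
        Finset.sum_Ico_eq_sum_range]
      simp [add_comm]
    have hbound : ∑ i ∈ Finset.range K, π (i+1) a / (1 + T i)
        ≤ ∑ i ∈ Finset.range K,
            (2 * Real.log (1 + T (i+1)) - 2 * Real.log (1 + T i)) := by
      apply Finset.sum_le_sum
      intro i hi
      have hiK : i + 1 ∈ Finset.Icc 1 K := by
        simp only [Finset.mem_range] at hi
        exact Finset.mem_Icc.mpr ⟨by omega, by omega⟩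
      have hx := hπ01 (i+1) hiK a
      have hs : 0 ≤ T i := hTnn i (by simp only [Finset.mem_range] at hi; omega)
      have := aux_log_bound (π (i+1) a) (T i) hx.1 hx.2 hs
      rw [hstep i]
      have hre : 1 + T i + π (i+1) a = 1 + (T i + π (i+1) a) := by ring
      rw [hre] at this
      linarith
    have htel : ∑ i ∈ Finset.range K,
        (2 * Real.log (1 + T (i+1)) - 2 * Real.log (1 + T i))
        = 2 * Real.log (1 + T K) - 2 * Real.log (1 + T 0) :=
      Finset.sum_range_sub (fun i => 2 * Real.log (1 + T i)) K
    have hT0 : T 0 = 0 := by simp [hT]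
    have hTK : T K ≤ K := by
      have : T K ≤ ∑ _i ∈ Finset.Icc 1 K, (1:ℝ) :=
        Finset.sum_le_sum fun i hi => (hπ01 i hi a).2
      simpa using this
    have hfin : Real.log (1 + T K) ≤ Real.log (K + 1) := by
      apply Real.log_le_log (by linarith [hTnn K le_rfl])
      linarith
    calc ∑ k ∈ Finset.Icc 1 K, π k a / (1 + T (k-1))
        ≤ 2 * Real.log (1 + T K) - 2 * Real.log (1 + T 0) := by
          rw [hsum_eq]; rw [htel] at hbound; exact hbound
      _ ≤ 2 * Real.log (K + 1) := by
          rw [hT0]; simp only [add_zero, Real.log_one]; linarith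
  calc ∑ a, ∑ k ∈ Finset.Icc 1 K, π k a / (1 + ∑ i ∈ Finset.Icc 1 (k - 1), π i a)
      ≤ ∑ _a : A, 2 * Real.log (K + 1) := Finset.sum_le_sum fun a _ => per_a a
    _ = 2 * (Fintype.card A) * Real.log (K + 1) := by
        rw [Finset.sum_const, Finset.card_univ, nsmul_eq_mul]; ring
end

section
/- Let A be a nonempty finite set, let K be a positive integer, let β ≥ 0, and for each k ∈ {1, …, K} let π_k : A → [0,1] be a probability vector on A. Define the exploration bonus b_k(a) = min{1, (β/2) / (1 + Σ_{i=1}^{k-1} π_i(a))}. Then Σ_{k=1}^K Σ_{a ∈ A} π_k(a) b_k(a) ≤ β |A| log(K + 1). -/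
lemma bonus_step (β p s : ℝ) (hβ : 0 ≤ β) (hp0 : 0 ≤ p) (hp1 : p ≤ 1) (hs : 0 ≤ s) :
    p * min 1 ((β / 2) / (1 + s)) ≤ β * (Real.log (1 + s + p) - Real.log (1 + s)) := by
  have h1 : (0:ℝ) < 1 + s := by linarith
  have h2 : (0:ℝ) < 1 + s + p := by linarith
  have hlog : Real.log ((1+s)/(1+s+p)) ≤ (1+s)/(1+s+p) - 1 :=
    Real.log_le_sub_one_of_pos (by positivity)
  rw [Real.log_div h1.ne' h2.ne'] at hlog
  have hfrac : (1+s)/(1+s+p) - 1 = -(p/(1+s+p)) := by field_simp; ring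
  have hkey : p/(1+s+p) ≤ Real.log (1+s+p) - Real.log (1+s) := by
    rw [hfrac] at hlog; linarith
  have hmin : min 1 ((β/2)/(1+s)) ≤ (β/2)/(1+s) := min_le_right _ _
  calc p * min 1 ((β/2)/(1+s)) ≤ p * ((β/2)/(1+s)) :=
        mul_le_mul_of_nonneg_left hmin hp0
    _ ≤ β * (p/(1+s+p)) := by
        have h3 : β * (p/(1+s+p)) = (β*p)/(1+s+p) := by ring
        have h4 : p * ((β/2)/(1+s)) = (p*β/2)/(1+s) := by ring
        rw [h3, h4, div_le_div_iff₀ h1 h2]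
        nlinarith [mul_nonneg hβ hp0]
    _ ≤ β * (Real.log (1+s+p) - Real.log (1+s)) :=
        mul_le_mul_of_nonneg_left hkey hβ

/-- Bonuses bound: for probability vectors `π_1, …, π_K` on a nonempty finite set `A`
and exploration bonuses `b_k(a) = min{1, (β/2)/(1 + Σ_{i=1}^{k-1} π_i(a))}` with `β ≥ 0`,
`Σ_{k=1}^K Σ_a π_k(a) b_k(a) ≤ β |A| log (K + 1)`. -/
theorem bonuses_bound {A : Type*} [Fintype A] [Nonempty A] (K : ℕ) (hK : 0 < K)
    (β : ℝ) (hβ : 0 ≤ β)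
    (π : ℕ → A → ℝ)
    (hπ01 : ∀ k ∈ Finset.Icc 1 K, ∀ a, 0 ≤ π k a ∧ π k a ≤ 1)
    (hπsum : ∀ k ∈ Finset.Icc 1 K, ∑ a, π k a = 1) :
    ∑ k ∈ Finset.Icc 1 K, ∑ a, π k a *
        min 1 ((β / 2) / (1 + ∑ i ∈ Finset.Icc 1 (k - 1), π i a))
      ≤ β * (Fintype.card A) * Real.log (K + 1) := by
  rw [Finset.sum_comm]
  have hbound : ∀ a : A,
      ∑ k ∈ Finset.Icc 1 K, π k a *
        min 1 ((β / 2) / (1 + ∑ i ∈ Finset.Icc 1 (k - 1), π i a))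
      ≤ β * Real.log (K + 1) := by
    intro a
    set S : ℕ → ℝ := fun n => ∑ i ∈ Finset.Icc 1 n, π i a with hS
    have hSnonneg : ∀ n, n ≤ K → 0 ≤ S n := by
      intro n hn
      apply Finset.sum_nonneg
      intro i hi
      simp only [Finset.mem_Icc] at hi
      exact (hπ01 i (Finset.mem_Icc.mpr ⟨hi.1, hi.2.trans hn⟩) a).1
    set g : ℕ → ℝ := fun n => Real.log (1 + S n) with hg
    have hstep : ∀ i ∈ Finset.range K,
        π (1 + i) a * min 1 ((β / 2) / (1 + ∑ j ∈ Finset.Icc 1 (1 + i - 1), π j a))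
          ≤ β * (g (i + 1) - g i) := by
      intro i hi
      simp only [Finset.mem_range] at hi
      have hmem : (1 + i) ∈ Finset.Icc 1 K := Finset.mem_Icc.mpr ⟨by omega, by omega⟩
      have hp := hπ01 (1 + i) hmem a
      have hsub : 1 + i - 1 = i := by omega
      rw [hsub]
      have hSsucc : S (i + 1) = S i + π (i + 1) a :=
        Finset.sum_Icc_succ_top (by omega) _
      have := bonus_step β (π (1 + i) a) (S i) hβ hp.1 hp.2 (hSnonneg i (by omega))
      simp only [hg]
      rw [hSsucc]
      have h1i : (1 : ℕ) + i = i + 1 := by omega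
      rw [h1i] at this ⊢
      convert this using 3 <;> ring
    calc ∑ k ∈ Finset.Icc 1 K, π k a *
          min 1 ((β / 2) / (1 + ∑ i ∈ Finset.Icc 1 (k - 1), π i a))
        = ∑ i ∈ Finset.range K, π (1 + i) a *
          min 1 ((β / 2) / (1 + ∑ j ∈ Finset.Icc 1 (1 + i - 1), π j a)) := by
          rw [← Finset.Ico_add_one_right_eq_Icc, Finset.sum_Ico_eq_sum_range]
          simp
      _ ≤ ∑ i ∈ Finset.range K, β * (g (i + 1) - g i) := Finset.sum_le_sum hstep
      _ = β * ∑ i ∈ Finset.range K, (g (i + 1) - g i) := by rw [Finset.mul_sum]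
      _ = β * (g K - g 0) := by rw [Finset.sum_range_sub]
      _ = β * Real.log (1 + S K) := by
          simp [hg, hS]
      _ ≤ β * Real.log (K + 1) := by
          apply mul_le_mul_of_nonneg_left _ hβ
          apply Real.log_le_log (by linarith [hSnonneg K le_rfl])
          have : S K ≤ K := by
            calc S K ≤ ∑ i ∈ Finset.Icc 1 K, (1:ℝ) := by
                  apply Finset.sum_le_sum
                  intro i hi
                  exact (hπ01 i hi a).2
              _ = K := by simp
          linarith
  calc ∑ a : A, ∑ k ∈ Finset.Icc 1 K, π k a *
        min 1 ((β / 2) / (1 + ∑ i ∈ Finset.Icc 1 (k - 1), π i a))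
      ≤ ∑ _a : A, β * Real.log (K + 1) := Finset.sum_le_sum fun a _ => hbound a
    _ = β * (Fintype.card A) * Real.log (K + 1) := by
        rw [Finset.sum_const]
        simp [Finset.card_univ]
        ring
end

section
/- Let A be a nonempty finite set, let q : A → ℝ be a probability vector on A with q(a) > 0 for all a, let ℓ : A → ℝ, and let η > 0. Define p(a) = q(a) exp(−η ℓ(a)) / Σ_{a' ∈ A} q(a') exp(−η ℓ(a')). Then p is a probability vector on A, and for every probability vector π on A, η Σ_{a} ℓ(a) p(a) + Σ_{a} p(a) log(p(a)/q(a)) ≤ η Σ_{a} ℓ(a) π(a) + Σ_{a} π(a) log(π(a)/q(a)); that is, p minimizes the objective π ↦ η ⟨ℓ, π⟩ + d_KL(π ‖ q) over the probability simplex on A. -/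
/-- The exponential-weights update `p(a) ∝ q(a) exp(-η ℓ(a))` is a probability vector and
minimizes `π ↦ η ⟨ℓ, π⟩ + d_KL(π ‖ q)` over the probability simplex on `A`. -/
theorem exp_weights_minimizes_kl {A : Type*} [Fintype A] [Nonempty A]
    (q : A → ℝ) (hq_pos : ∀ a, 0 < q a) (hq_le : ∀ a, q a ≤ 1) (hq_sum : ∑ a, q a = 1)
    (ℓ : A → ℝ) (η : ℝ) (hη : 0 < η)
    (p : A → ℝ)
    (hp : ∀ a, p a = q a * Real.exp (-η * ℓ a) / ∑ a', q a' * Real.exp (-η * ℓ a')) :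
    ((∀ a, 0 ≤ p a ∧ p a ≤ 1) ∧ ∑ a, p a = 1) ∧
      ∀ π : A → ℝ, (∀ a, 0 ≤ π a ∧ π a ≤ 1) → (∑ a, π a = 1) →
        η * (∑ a, ℓ a * p a) + ∑ a, p a * Real.log (p a / q a)
          ≤ η * (∑ a, ℓ a * π a) + ∑ a, π a * Real.log (π a / q a) := by
  set Z := ∑ a', q a' * Real.exp (-η * ℓ a') with hZ_def
  have hZ : 0 < Z :=
    Finset.sum_pos (fun a _ => mul_pos (hq_pos a) (Real.exp_pos _)) Finset.univ_nonempty
  have hp_pos : ∀ a, 0 < p a := fun a => by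
    rw [hp]; exact div_pos (mul_pos (hq_pos a) (Real.exp_pos _)) hZ
  have hp_sum : ∑ a, p a = 1 := by
    simp only [hp]; rw [← Finset.sum_div, div_self hZ.ne']
  have hp_le : ∀ a, p a ≤ 1 := fun a => by
    calc p a ≤ ∑ a', p a' :=
          Finset.single_le_sum (fun a' _ => (hp_pos a').le) (Finset.mem_univ a)
      _ = 1 := hp_sum
  have hlogp : ∀ a, Real.log (p a) = Real.log (q a) + (-η * ℓ a) - Real.log Z := fun a => by
    rw [hp, Real.log_div (mul_pos (hq_pos a) (Real.exp_pos _)).ne' hZ.ne',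
        Real.log_mul (hq_pos a).ne' (Real.exp_pos _).ne', Real.log_exp]
  have key : ∀ π : A → ℝ, (∀ a, 0 ≤ π a) → (∑ a, π a = 1) →
      η * (∑ a, ℓ a * π a) + ∑ a, π a * Real.log (π a / q a)
        = (∑ a, π a * Real.log (π a / p a)) - Real.log Z := by
    intro π hπ hπs
    have hpt : ∀ a, η * (ℓ a * π a) + π a * Real.log (π a / q a)
        = π a * Real.log (π a / p a) - π a * Real.log Z := by
      intro a
      rcases eq_or_lt_of_le (hπ a) with h | h
      · simp [← h]
      · rw [Real.log_div h.ne' (hq_pos a).ne', Real.log_div h.ne' (hp_pos a).ne', hlogp a]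
        ring
    rw [Finset.mul_sum, ← Finset.sum_add_distrib]
    simp_rw [hpt]
    rw [Finset.sum_sub_distrib, ← Finset.sum_mul, hπs, one_mul]
  have gibbs : ∀ π : A → ℝ, (∀ a, 0 ≤ π a) → (∑ a, π a = 1) →
      0 ≤ ∑ a, π a * Real.log (π a / p a) := by
    intro π hπ hπs
    have h1 : ∑ a, π a * Real.log (p a / π a) ≤ ∑ a, (p a - π a) := by
      apply Finset.sum_le_sum
      intro a _
      rcases eq_or_lt_of_le (hπ a) with h | h
      · simp [← h]; exact (hp_pos a).le
      · have hl := Real.log_le_sub_one_of_pos (div_pos (hp_pos a) h)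
        calc π a * Real.log (p a / π a) ≤ π a * (p a / π a - 1) :=
              mul_le_mul_of_nonneg_left hl h.le
          _ = p a - π a := by field_simp
    have h2 : ∑ a, (p a - π a) = (0 : ℝ) := by
      rw [Finset.sum_sub_distrib, hp_sum, hπs]; ring
    have h3 : ∀ a, π a * Real.log (π a / p a) = -(π a * Real.log (p a / π a)) := by
      intro a
      rcases eq_or_lt_of_le (hπ a) with h | h
      · simp [← h]
      · rw [Real.log_div h.ne' (hp_pos a).ne', Real.log_div (hp_pos a).ne' h.ne']; ring
    simp_rw [h3]
    rw [Finset.sum_neg_distrib]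
    linarith
  refine ⟨⟨fun a => ⟨(hp_pos a).le, hp_le a⟩, hp_sum⟩, fun π hπ hπs => ?_⟩
  have hπ' : ∀ a, 0 ≤ π a := fun a => (hπ a).1
  rw [key p (fun a => (hp_pos a).le) hp_sum, key π hπ' hπs]
  have hzero : ∑ a, p a * Real.log (p a / p a) = 0 := by
    apply Finset.sum_eq_zero
    intro a _
    rw [div_self (hp_pos a).ne', Real.log_one, mul_zero]
  rw [hzero]
  linarith [gibbs π hπ' hπs]
end

section
/- Let d ≥ 2 be an integer, let K be a positive integer, let η > 0, and for each k ∈ {1, …, K} let g_k ∈ ℝ^d satisfy g_{k,i} ≥ 0 for all coordinates i. Define the exponential-weights iterates x_1 = (1/d, …, 1/d) and x_{k+1, i} = x_{k,i} exp(−η g_{k,i}) / Σ_{j=1}^d x_{k,j} exp(−η g_{k,j}). Then for every probability vector u on {1, …, d}, Σ_{k=1}^K ⟨g_k, x_k − u⟩ ≤ (log d)/η + (η/2) Σ_{k=1}^K Σ_{i=1}^d x_{k,i} g_{k,i}^2. -/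
lemma exp_neg_le_quadratic {a : ℝ} (ha : 0 ≤ a) : Real.exp (-a) ≤ 1 - a + a ^ 2 / 2 := by
  have h1 : 1 + a + a ^ 2 / 2 ≤ Real.exp a := by
    have h := Real.sum_le_exp_of_nonneg ha 3
    simp [Finset.sum_range_succ, Nat.factorial] at h
    nlinarith [h]
  have h2 : (0:ℝ) < 1 + a + a ^ 2 / 2 := by positivity
  have h3 : Real.exp (-a) * Real.exp a = 1 := by
    rw [← Real.exp_add]; simp
  nlinarith [Real.exp_pos (-a), h1, h3,
    mul_le_mul_of_nonneg_left h1 (Real.exp_pos (-a)).le, sq_nonneg (a ^ 2)]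

/-- Fundamental inequality of online mirror descent (exponential weights) over the simplex:
for nonnegative losses `g_k`, uniform initialization `x_1 = (1/d, …, 1/d)` and multiplicative
updates, for every probability vector `u`,
`Σ_{k=1}^K ⟨g_k, x_k − u⟩ ≤ (log d)/η + (η/2) Σ_{k=1}^K Σ_i x_{k,i} g_{k,i}²`. -/
theorem omd_fundamental_inequality (d : ℕ) (hd : 2 ≤ d) (K : ℕ) (hK : 0 < K)
    (η : ℝ) (hη : 0 < η)
    (g : ℕ → Fin d → ℝ) (hg : ∀ k ∈ Finset.Icc 1 K, ∀ i, 0 ≤ g k i)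
    (x : ℕ → Fin d → ℝ)
    (hx1 : ∀ i, x 1 i = 1 / d)
    (hxrec : ∀ k ∈ Finset.Icc 1 K, ∀ i,
      x (k + 1) i = x k i * Real.exp (-η * g k i) / ∑ j, x k j * Real.exp (-η * g k j))
    (u : Fin d → ℝ) (hu : ∀ i, 0 ≤ u i ∧ u i ≤ 1) (husum : ∑ i, u i = 1) :
    ∑ k ∈ Finset.Icc 1 K, ∑ i, g k i * (x k i - u i)
      ≤ Real.log d / η + η / 2 * ∑ k ∈ Finset.Icc 1 K, ∑ i, x k i * (g k i) ^ 2 := by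
  have hd0 : (0:ℝ) < (d:ℝ) := by
    have : 0 < d := by omega
    exact_mod_cast this
  haveI : Nonempty (Fin d) := ⟨⟨0, by omega⟩⟩
  -- positivity and normalization of iterates
  have hx : ∀ k, 1 ≤ k → k ≤ K + 1 → (∀ i, 0 < x k i) ∧ (∑ i, x k i) = 1 := by
    intro k
    induction k with
    | zero => intro h; omega
    | succ n ih =>
      intro _ hle
      rcases Nat.eq_zero_or_pos n with hn | hn
      · subst hn
        constructor
        · intro i; rw [hx1 i]; positivity
        · simp only [hx1]
          rw [Finset.sum_const, Finset.card_univ, Fintype.card_fin, nsmul_eq_mul]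
          field_simp
      · have hnK : n ≤ K := by omega
        obtain ⟨hpos, hsum⟩ := ih hn (by omega)
        have hmem : n ∈ Finset.Icc 1 K := Finset.mem_Icc.mpr ⟨hn, hnK⟩
        have hZpos : 0 < ∑ j, x n j * Real.exp (-η * g n j) := by
          apply Finset.sum_pos
          · intro j _; exact mul_pos (hpos j) (Real.exp_pos _)
          · exact Finset.univ_nonempty
        constructor
        · intro i
          rw [hxrec n hmem i]
          exact div_pos (mul_pos (hpos i) (Real.exp_pos _)) hZpos
        · simp only [hxrec n hmem]
          rw [← Finset.sum_div, div_self hZpos.ne']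
  -- per-step inequality
  set F : ℕ → ℝ := fun k => ∑ i, u i * Real.log (x k i) with hF
  have hstep : ∀ k ∈ Finset.Icc 1 K,
      η * ∑ i, g k i * (x k i - u i)
        ≤ (F (k + 1) - F k) + η ^ 2 / 2 * ∑ i, x k i * (g k i) ^ 2 := by
    intro k hk
    obtain ⟨hk1, hk2⟩ := Finset.mem_Icc.mp hk
    obtain ⟨hpos, hsum⟩ := hx k hk1 (by omega)
    set Z : ℝ := ∑ j, x k j * Real.exp (-η * g k j) with hZ
    have hZpos : 0 < Z := by
      apply Finset.sum_pos
      · intro j _; exact mul_pos (hpos j) (Real.exp_pos _)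
      · exact Finset.univ_nonempty
    -- bound on Z
    have hZb : Z ≤ 1 - η * (∑ i, g k i * x k i) + η ^ 2 / 2 * (∑ i, x k i * (g k i) ^ 2) := by
      have hterm : ∀ i ∈ Finset.univ, x k i * Real.exp (-η * g k i)
          ≤ x k i * (1 - η * g k i + (η * g k i) ^ 2 / 2) := by
        intro i _
        apply mul_le_mul_of_nonneg_left _ (hpos i).le
        have := exp_neg_le_quadratic (mul_nonneg hη.le (hg k hk i))
        simpa [neg_mul] using this
      refine (Finset.sum_le_sum hterm).trans_eq ?_
      have hptw : ∀ i, x k i * (1 - η * g k i + (η * g k i) ^ 2 / 2)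
          = x k i - η * (g k i * x k i) + η ^ 2 / 2 * (x k i * (g k i) ^ 2) := by
        intro i; ring
      simp_rw [hptw]
      rw [Finset.sum_add_distrib, Finset.sum_sub_distrib, ← Finset.mul_sum, ← Finset.mul_sum,
        hsum]
    have hlogZ : Real.log Z ≤ -(η * ∑ i, g k i * x k i)
        + η ^ 2 / 2 * (∑ i, x k i * (g k i) ^ 2) :=
      (Real.log_le_sub_one_of_pos hZpos).trans (by linarith)
    -- log recursion
    have hlog : ∀ i, Real.log (x (k + 1) i)
        = Real.log (x k i) + (-η * g k i) - Real.log Z := by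
      intro i
      rw [hxrec k hk i, ← hZ, Real.log_div (mul_pos (hpos i) (Real.exp_pos _)).ne' hZpos.ne',
        Real.log_mul (hpos i).ne' (Real.exp_pos _).ne', Real.log_exp]
    have hFstep : F (k + 1) - F k = -η * (∑ i, u i * g k i) - Real.log Z := by
      simp only [hF]
      simp_rw [hlog]
      have : ∀ i, u i * (Real.log (x k i) + -η * g k i - Real.log Z)
          = u i * Real.log (x k i) + (-η) * (u i * g k i) - Real.log Z * u i := by
        intro i; ring
      simp_rw [this]
      rw [Finset.sum_sub_distrib, Finset.sum_add_distrib, ← Finset.mul_sum, ← Finset.mul_sum,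
        husum]
      ring
    have hLHS : ∑ i, g k i * (x k i - u i)
        = (∑ i, g k i * x k i) - (∑ i, u i * g k i) := by
      simp_rw [mul_sub]
      rw [Finset.sum_sub_distrib]
      congr 1
      exact Finset.sum_congr rfl fun i _ => mul_comm _ _
    rw [hLHS, hFstep]
    nlinarith [hlogZ]
  -- telescoping
  have htel : ∑ k ∈ Finset.Icc 1 K, (F (k + 1) - F k) = F (K + 1) - F 1 := by
    rw [← Finset.Ico_add_one_right_eq_Icc, Finset.sum_Ico_eq_sum_range]
    have := Finset.sum_range_sub (fun n => F (1 + n)) K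
    simpa [add_comm 1 K, add_assoc] using this
  -- summing
  have hsum1 : η * ∑ k ∈ Finset.Icc 1 K, ∑ i, g k i * (x k i - u i)
      ≤ (F (K + 1) - F 1) + η ^ 2 / 2 * ∑ k ∈ Finset.Icc 1 K, ∑ i, x k i * (g k i) ^ 2 := by
    rw [Finset.mul_sum, ← htel, Finset.mul_sum, ← Finset.sum_add_distrib]
    exact Finset.sum_le_sum hstep
  -- F 1 = -log d
  have hF1 : F 1 = -Real.log d := by
    simp only [hF]
    simp_rw [hx1]
    rw [← Finset.sum_mul, husum, one_mul, one_div, Real.log_inv]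
  -- F (K+1) ≤ 0
  have hFK : F (K + 1) ≤ 0 := by
    obtain ⟨hpos, hsum⟩ := hx (K + 1) (by omega) le_rfl
    apply Finset.sum_nonpos
    intro i _
    apply mul_nonpos_of_nonneg_of_nonpos (hu i).1
    apply Real.log_nonpos (hpos i).le
    rw [← hsum]
    exact Finset.single_le_sum (fun j _ => (hpos j).le) (Finset.mem_univ i)
  have hmain : η * ∑ k ∈ Finset.Icc 1 K, ∑ i, g k i * (x k i - u i)
      ≤ Real.log d + η ^ 2 / 2 * ∑ k ∈ Finset.Icc 1 K, ∑ i, x k i * (g k i) ^ 2 := by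
    rw [hF1] at hsum1
    linarith
  -- divide by η
  have hrw : ∑ k ∈ Finset.Icc 1 K, ∑ i, g k i * (x k i - u i)
      = (η * ∑ k ∈ Finset.Icc 1 K, ∑ i, g k i * (x k i - u i)) / η := by
    field_simp
  rw [hrw]
  rw [div_le_iff₀ hη]
  calc η * ∑ k ∈ Finset.Icc 1 K, ∑ i, g k i * (x k i - u i)
      ≤ Real.log d + η ^ 2 / 2 * ∑ k ∈ Finset.Icc 1 K, ∑ i, x k i * (g k i) ^ 2 := hmain
    _ = (Real.log d / η + η / 2 * ∑ k ∈ Finset.Icc 1 K, ∑ i, x k i * (g k i) ^ 2) * η := by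
        field_simp
end

section
/- Let A be a finite set with |A| ≥ 2, let K be a positive integer, and for each k ∈ {1, …, K} let ℓ̂_k : A → [0,1]. Set η = √(2 log|A| / K), let π_1 be the uniform distribution on A, and define π_{k+1}(a) = π_k(a) exp(−η ℓ̂_k(a)) / Σ_{a' ∈ A} π_k(a') exp(−η ℓ̂_k(a')). Then for every probability vector π⋆ on A, Σ_{k=1}^K Σ_{a ∈ A} (π_k(a) − π⋆(a)) ℓ̂_k(a) ≤ √(2 K log|A|). -/
lemma exp_neg_le_quad (x : ℝ) (hx : 0 ≤ x) : Real.exp (-x) ≤ 1 - x + x^2/2 := by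
  have hd : ∀ y : ℝ, HasDerivAt (fun y : ℝ => (1 - y + y^2/2) * Real.exp y)
      (y^2/2 * Real.exp y) y := by
    intro y
    have h1 : HasDerivAt (fun y : ℝ => 1 - y + y^2/2) (-1 + (2:ℕ)*y^1/2) y := by
      exact ((hasDerivAt_id y).const_sub 1).add ((hasDerivAt_pow 2 y).div_const 2)
    have h2 := h1.mul (Real.hasDerivAt_exp y)
    refine h2.congr_deriv ?_
    push_cast
    ring
  have hmono : MonotoneOn (fun y : ℝ => (1 - y + y^2/2) * Real.exp y) (Set.Ici 0) := by
    apply monotoneOn_of_deriv_nonneg (convex_Ici 0)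
    · exact Continuous.continuousOn (by fun_prop)
    · intro y hy
      exact (hd y).differentiableAt.differentiableWithinAt
    · intro y hy
      rw [(hd y).deriv]
      have : (0:ℝ) ≤ y := le_of_lt (by simpa using hy)
      positivity
  have h := hmono (Set.self_mem_Ici) hx hx
  simp only at h
  norm_num at h
  rw [Real.exp_neg, ← one_div, div_le_iff₀ (Real.exp_pos x)]
  linarith

/-- Exponential-weights regret bound with `η = √(2 log|A| / K)` and losses in `[0,1]`:
for every probability vector `π⋆`,
`Σ_{k=1}^K Σ_a (π_k(a) − π⋆(a)) ℓ̂_k(a) ≤ √(2 K log|A|)`. -/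
theorem exp_weights_regret {A : Type*} [Fintype A] (hA : 2 ≤ Fintype.card A)
    (K : ℕ) (hK : 0 < K)
    (ℓ : ℕ → A → ℝ) (hℓ : ∀ k ∈ Finset.Icc 1 K, ∀ a, 0 ≤ ℓ k a ∧ ℓ k a ≤ 1)
    (η : ℝ) (hη : η = Real.sqrt (2 * Real.log (Fintype.card A) / K))
    (π : ℕ → A → ℝ)
    (hπ1 : ∀ a, π 1 a = 1 / Fintype.card A)
    (hπrec : ∀ k ∈ Finset.Icc 1 K, ∀ a,
      π (k + 1) a = π k a * Real.exp (-η * ℓ k a) / ∑ a', π k a' * Real.exp (-η * ℓ k a'))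
    (πs : A → ℝ) (hπs : ∀ a, 0 ≤ πs a ∧ πs a ≤ 1) (hπssum : ∑ a, πs a = 1) :
    ∑ k ∈ Finset.Icc 1 K, ∑ a, (π k a - πs a) * ℓ k a
      ≤ Real.sqrt (2 * K * Real.log (Fintype.card A)) := by
  have : Nonempty A := Fintype.card_pos_iff.mp (by omega)
  have hn2 : (2:ℝ) ≤ (Fintype.card A : ℝ) := by exact_mod_cast hA
  have hnpos : (0:ℝ) < (Fintype.card A : ℝ) := by linarith
  have hlogpos : 0 < Real.log (Fintype.card A) := Real.log_pos (by linarith)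
  have hKpos : (0:ℝ) < (K:ℝ) := by exact_mod_cast hK
  have hηpos : 0 < η := by rw [hη]; exact Real.sqrt_pos.mpr (by positivity)
  have hη2 : η^2 = 2 * Real.log (Fintype.card A) / K := by
    rw [hη]; exact Real.sq_sqrt (by positivity)
  set Z : ℕ → ℝ := fun k => ∑ a', π k a' * Real.exp (-η * ℓ k a') with hZdef
  -- π k is a positive probability vector for 1 ≤ k ≤ K+1
  have hprob : ∀ m : ℕ, m ≤ K → (∀ a, 0 < π (m+1) a) ∧ (∑ a, π (m+1) a = 1) := by
    intro m
    induction m with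
    | zero =>
      intro _
      refine ⟨fun a => by rw [hπ1]; positivity, ?_⟩
      simp only [hπ1, Finset.sum_const, Finset.card_univ, nsmul_eq_mul]
      field_simp
    | succ m ih =>
      intro hm
      obtain ⟨hpos, hsum⟩ := ih (by omega)
      have hmem : m + 1 ∈ Finset.Icc 1 K := by simp; omega
      have hZpos : 0 < ∑ a', π (m+1) a' * Real.exp (-η * ℓ (m+1) a') :=
        Finset.sum_pos (fun a _ => mul_pos (hpos a) (Real.exp_pos _)) Finset.univ_nonempty
      constructor
      · intro a
        rw [hπrec _ hmem a]
        exact div_pos (mul_pos (hpos a) (Real.exp_pos _)) hZpos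
      · simp_rw [hπrec _ hmem]
        rw [← Finset.sum_div, div_self (ne_of_gt hZpos)]
  have hprob' : ∀ k, 1 ≤ k → k ≤ K + 1 → (∀ a, 0 < π k a) ∧ (∑ a, π k a = 1) := by
    intro k h1 h2
    obtain ⟨m, rfl⟩ : ∃ m, k = m + 1 := ⟨k - 1, by omega⟩
    exact hprob m (by omega)
  have hZpos : ∀ k ∈ Finset.Icc 1 K, 0 < Z k := by
    intro k hk
    have hk' := Finset.mem_Icc.mp hk
    obtain ⟨hp, _⟩ := hprob' k hk'.1 (by omega)
    exact Finset.sum_pos (fun a _ => mul_pos (hp a) (Real.exp_pos _)) Finset.univ_nonempty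
  -- unroll the recursion
  have hunroll : ∀ j, j ≤ K → ∀ a, (∏ k ∈ Finset.Icc 1 j, Z k) * π (j+1) a
      = π 1 a * Real.exp (-η * ∑ k ∈ Finset.Icc 1 j, ℓ k a) := by
    intro j
    induction j with
    | zero => intro _ a; simp
    | succ j ih =>
      intro hj a
      have hmem : j + 1 ∈ Finset.Icc 1 K := by simp; omega
      have hZj : Z (j+1) ≠ 0 := ne_of_gt (hZpos _ hmem)
      rw [Finset.prod_Icc_succ_top (by omega : 1 ≤ j + 1),
        Finset.sum_Icc_succ_top (by omega : 1 ≤ j + 1), hπrec _ hmem a]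
      have key : (∏ k ∈ Finset.Icc 1 j, Z k) * Z (j+1)
          * (π (j+1) a * Real.exp (-η * ℓ (j+1) a) / Z (j+1))
          = ((∏ k ∈ Finset.Icc 1 j, Z k) * π (j+1) a) * Real.exp (-η * ℓ (j+1) a) := by
        field_simp
      rw [key, ih (by omega) a, mul_assoc, ← Real.exp_add]
      congr 2
      ring
  -- product of normalizers
  have hprod : ∏ k ∈ Finset.Icc 1 K, Z k
      = ∑ a, π 1 a * Real.exp (-η * ∑ k ∈ Finset.Icc 1 K, ℓ k a) := by
    have hs := (hprob' (K+1) (by omega) (by omega)).2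
    calc ∏ k ∈ Finset.Icc 1 K, Z k
        = (∏ k ∈ Finset.Icc 1 K, Z k) * ∑ a, π (K+1) a := by rw [hs, mul_one]
      _ = ∑ a, (∏ k ∈ Finset.Icc 1 K, Z k) * π (K+1) a := by rw [Finset.mul_sum]
      _ = _ := Finset.sum_congr rfl (fun a _ => hunroll K le_rfl a)
  -- upper bound on log Z k
  have hlogZ : ∀ k ∈ Finset.Icc 1 K,
      Real.log (Z k) ≤ -η * (∑ a, π k a * ℓ k a) + η^2/2 := by
    intro k hk
    have hk' := Finset.mem_Icc.mp hk
    obtain ⟨hp, hs⟩ := hprob' k hk'.1 (by omega)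
    have hZle : Z k ≤ 1 - η * (∑ a, π k a * ℓ k a) + η^2/2 := by
      have step : Z k ≤ ∑ a, π k a * (1 - η * ℓ k a + η^2/2) := by
        apply Finset.sum_le_sum
        intro a _
        apply mul_le_mul_of_nonneg_left _ (le_of_lt (hp a))
        have hla := hℓ k hk a
        have h1 : Real.exp (-(η * ℓ k a)) ≤ 1 - η * ℓ k a + (η * ℓ k a)^2/2 :=
          exp_neg_le_quad (η * ℓ k a) (mul_nonneg (le_of_lt hηpos) hla.1)
        have h2 : (η * ℓ k a)^2 ≤ η^2 := by
          have hl2 : (ℓ k a)^2 ≤ 1 := by nlinarith [hla.1, hla.2]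
          calc (η * ℓ k a)^2 = η^2 * (ℓ k a)^2 := mul_pow η (ℓ k a) 2
            _ ≤ η^2 * 1 := mul_le_mul_of_nonneg_left hl2 (sq_nonneg η)
            _ = η^2 := mul_one _
        rw [neg_mul]
        linarith
      calc Z k ≤ ∑ a, π k a * (1 - η * ℓ k a + η^2/2) := step
        _ = ∑ a, (π k a - η * (π k a * ℓ k a) + (η^2/2) * π k a) := by
            apply Finset.sum_congr rfl; intros; ring
        _ = (∑ a, π k a) - η * (∑ a, π k a * ℓ k a) + (η^2/2) * ∑ a, π k a := by
            rw [Finset.sum_add_distrib, Finset.sum_sub_distrib, ← Finset.mul_sum,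
              ← Finset.mul_sum]
        _ = 1 - η * (∑ a, π k a * ℓ k a) + η^2/2 := by rw [hs]; ring
    have := Real.log_le_sub_one_of_pos (hZpos k hk)
    linarith
  -- lower bound via Jensen
  set L : A → ℝ := fun a => ∑ k ∈ Finset.Icc 1 K, ℓ k a with hLdef
  have hjensen : Real.exp (∑ a, πs a * (-η * L a)) ≤ ∑ a, πs a * Real.exp (-η * L a) := by
    have := convexOn_exp.map_sum_le (t := Finset.univ) (w := πs) (p := fun a => -η * L a)
      (fun a _ => (hπs a).1) hπssum (fun a _ => Set.mem_univ _)
    simpa [smul_eq_mul] using this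
  have hlower : (1 / (Fintype.card A : ℝ)) * Real.exp (∑ a, πs a * (-η * L a))
      ≤ ∏ k ∈ Finset.Icc 1 K, Z k := by
    rw [hprod]
    have h1 : ∑ a, π 1 a * Real.exp (-η * L a)
        = (1 / (Fintype.card A : ℝ)) * ∑ a, Real.exp (-η * L a) := by
      simp_rw [hπ1]; rw [Finset.mul_sum]
    rw [show (∑ a, π 1 a * Real.exp (-η * ∑ k ∈ Finset.Icc 1 K, ℓ k a))
        = ∑ a, π 1 a * Real.exp (-η * L a) from rfl, h1]
    apply mul_le_mul_of_nonneg_left _ (by positivity)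
    refine hjensen.trans (Finset.sum_le_sum fun a _ => ?_)
    exact mul_le_of_le_one_left (le_of_lt (Real.exp_pos _)) (hπs a).2
  have hloglow : -Real.log (Fintype.card A) + (∑ a, πs a * (-η * L a))
      ≤ ∑ k ∈ Finset.Icc 1 K, Real.log (Z k) := by
    rw [← Real.log_prod (fun k hk => ne_of_gt (hZpos k hk))]
    calc -Real.log (Fintype.card A) + (∑ a, πs a * (-η * L a))
        = Real.log ((1 / (Fintype.card A : ℝ)) * Real.exp (∑ a, πs a * (-η * L a))) := by
          rw [Real.log_mul (by positivity) (Real.exp_ne_zero _), Real.log_exp, one_div,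
            Real.log_inv]
      _ ≤ _ := Real.log_le_log (by positivity) hlower
  -- sum the upper bounds
  have hupper : ∑ k ∈ Finset.Icc 1 K, Real.log (Z k)
      ≤ -η * (∑ k ∈ Finset.Icc 1 K, ∑ a, π k a * ℓ k a) + K * (η^2/2) := by
    calc ∑ k ∈ Finset.Icc 1 K, Real.log (Z k)
        ≤ ∑ k ∈ Finset.Icc 1 K, (-η * (∑ a, π k a * ℓ k a) + η^2/2) :=
          Finset.sum_le_sum hlogZ
      _ = _ := by
          rw [Finset.sum_add_distrib, Finset.sum_const, Nat.card_Icc, ← Finset.mul_sum]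
          simp
  -- rewrite the πs term
  have hS : (∑ a, πs a * (-η * L a))
      = -η * ∑ k ∈ Finset.Icc 1 K, ∑ a, πs a * ℓ k a := by
    calc ∑ a, πs a * (-η * L a)
        = ∑ a, ∑ k ∈ Finset.Icc 1 K, (-η) * (πs a * ℓ k a) := by
          apply Finset.sum_congr rfl; intro a _
          rw [hLdef]; rw [Finset.mul_sum, Finset.mul_sum]
          apply Finset.sum_congr rfl; intros; ring
      _ = ∑ k ∈ Finset.Icc 1 K, ∑ a, (-η) * (πs a * ℓ k a) := Finset.sum_comm
      _ = _ := by
          rw [Finset.mul_sum]; apply Finset.sum_congr rfl; intros; rw [Finset.mul_sum]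
  have hR : ∑ k ∈ Finset.Icc 1 K, ∑ a, (π k a - πs a) * ℓ k a
      = (∑ k ∈ Finset.Icc 1 K, ∑ a, π k a * ℓ k a)
        - ∑ k ∈ Finset.Icc 1 K, ∑ a, πs a * ℓ k a := by
    rw [← Finset.sum_sub_distrib]
    apply Finset.sum_congr rfl; intro k _
    rw [← Finset.sum_sub_distrib]
    apply Finset.sum_congr rfl; intros; ring
  have hKη : (K:ℝ) * (η^2/2) = Real.log (Fintype.card A) := by
    rw [hη2]; field_simp
  have hmain : η * (∑ k ∈ Finset.Icc 1 K, ∑ a, (π k a - πs a) * ℓ k a)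
      ≤ 2 * Real.log (Fintype.card A) := by
    rw [hR]
    rw [hS] at hloglow
    nlinarith [hloglow.trans hupper]
  have hsq : Real.sqrt (2 * K * Real.log (Fintype.card A)) * η
      = 2 * Real.log (Fintype.card A) := by
    rw [hη, ← Real.sqrt_mul (by positivity)]
    rw [show (2 * (K:ℝ) * Real.log (Fintype.card A)) * (2 * Real.log (Fintype.card A) / K)
      = (2 * Real.log (Fintype.card A))^2 by field_simp]
    exact Real.sqrt_sq (by positivity)
  have : η * (∑ k ∈ Finset.Icc 1 K, ∑ a, (π k a - πs a) * ℓ k a)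
      ≤ η * Real.sqrt (2 * K * Real.log (Fintype.card A)) := by
    rw [mul_comm η]
    linarith [hmain, hsq]
  exact le_of_mul_le_mul_left this hηpos
end

section
/- Let f̂, f⋆ ∈ [0,1], let β > 0, and let S ≥ 0. Set b = min{1, (β/2)/(1 + S)}. Then max{0, f̂ − b} − f⋆ ≤ ((1 + S)/(2β)) (f̂ − f⋆)². -/
/-- For `f̂, f⋆ ∈ [0,1]`, `β > 0`, `S ≥ 0`, with bonus `b = min{1, (β/2)/(1+S)}`:
`max{0, f̂ − b} − f⋆ ≤ ((1+S)/(2β)) (f̂ − f⋆)²`. -/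
theorem clipped_optimistic_le (fhat fstar : ℝ)
    (hfhat0 : 0 ≤ fhat) (hfhat1 : fhat ≤ 1)
    (hfstar0 : 0 ≤ fstar) (hfstar1 : fstar ≤ 1)
    (β : ℝ) (hβ : 0 < β) (S : ℝ) (hS : 0 ≤ S) :
    max 0 (fhat - min 1 ((β / 2) / (1 + S))) - fstar
      ≤ ((1 + S) / (2 * β)) * (fhat - fstar) ^ 2 := by
  have h1S : (0:ℝ) < 1 + S := by linarith
  have hc : (0:ℝ) < (β / 2) / (1 + S) := by positivity
  have hRHS : 0 ≤ ((1 + S) / (2 * β)) * (fhat - fstar) ^ 2 := by positivity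
  rcases max_cases 0 (fhat - min 1 ((β / 2) / (1 + S))) with ⟨h, _⟩ | ⟨h, _⟩
  · rw [h]; linarith
  · rw [h]
    rcases min_cases 1 ((β / 2) / (1 + S)) with ⟨hm, _⟩ | ⟨hm, _⟩
    · rw [hm]; linarith
    · rw [hm]
      have hβne : (1 + S) ≠ 0 := ne_of_gt h1S
      have hcm : (β / 2 / (1 + S)) * (1 + S) = β / 2 := div_mul_cancel₀ _ hβne
      rw [div_mul_eq_mul_div, le_div_iff₀ (by linarith : (0:ℝ) < 2 * β)]
      nlinarith [sq_nonneg ((1 + S) * (fhat - fstar) - β), sq_nonneg (fhat - fstar)]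
end

section
/- Let A be a nonempty finite set, let K be a positive integer, and let β > 0. For each k ∈ {1, …, K} let π_k : A → [0,1] be a probability vector on A and let f̂_k : A → [0,1]; let f⋆ : A → [0,1]. Define the exploration bonus b_k(a) = min{1, (β/2)/(1 + Σ_{i=1}^{k-1} π_i(a))} and the clipped optimistic loss ℓ̂_k(a) = max{0, f̂_k(a) − b_k(a)}. Then Σ_{k=1}^K Σ_{a ∈ A} π_k(a) (f⋆(a) − ℓ̂_k(a)) ≤ 1 + 2 β |A| log(K + 1) + K/(2β) + (1/(2β)) Σ_{k=2}^K Σ_{i=1}^{k-1} Σ_{a ∈ A} π_i(a) (f⋆(a) − f̂_k(a))². -/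
open Finset

lemma half_le_log_one_add_s11 {u : ℝ} (h0 : 0 ≤ u) (h1 : u ≤ 1) :
    u / 2 ≤ Real.log (1 + u) := by
  rw [Real.le_log_iff_exp_le (by linarith)]
  have h2 : (1 : ℝ) - u / 2 ≤ Real.exp (-(u / 2)) := by
    have := Real.add_one_le_exp (-(u / 2)); linarith
  have h3 : Real.exp (u / 2) * Real.exp (-(u / 2)) = 1 := by
    rw [← Real.exp_add]; simp
  have h4 : 0 < Real.exp (u / 2) := Real.exp_pos _
  have h5 : Real.exp (u / 2) * (1 - u / 2) ≤ 1 := by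
    nlinarith
  nlinarith [sq_nonneg u]

lemma sum_div_le_two_log (K : ℕ) (g : ℕ → ℝ)
    (hg : ∀ k ∈ Icc 1 K, 0 ≤ g k ∧ g k ≤ 1) :
    ∑ k ∈ Icc 1 K, g k / (1 + ∑ i ∈ Icc 1 (k - 1), g i) ≤ 2 * Real.log (1 + K) := by
  set T : ℕ → ℝ := fun m => ∑ i ∈ Icc 1 m, g i with hT
  have hTnn : ∀ m, m ≤ K → 0 ≤ T m := by
    intro m hm
    apply Finset.sum_nonneg
    intro i hi
    simp only [mem_Icc] at hi
    exact (hg i (by simp only [mem_Icc]; omega)).1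
  have step : ∀ k ∈ Icc 1 K,
      g k / (1 + T (k - 1)) ≤ 2 * (Real.log (1 + T k) - Real.log (1 + T (k - 1))) := by
    intro k hk
    simp only [mem_Icc] at hk
    obtain ⟨m, rfl⟩ : ∃ m, k = m + 1 := ⟨k - 1, by omega⟩
    have hm1 : m + 1 - 1 = m := by omega
    rw [hm1]
    have hTk : T (m + 1) = T m + g (m + 1) := by
      rw [hT]
      exact Finset.sum_Icc_succ_top (by omega) g
    have hTm : 0 ≤ T m := hTnn m (by omega)
    have hg' := hg (m + 1) (by simp only [mem_Icc]; omega)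
    have hden : (0 : ℝ) < 1 + T m := by linarith
    have hu0 : 0 ≤ g (m + 1) / (1 + T m) := div_nonneg hg'.1 hden.le
    have hu1 : g (m + 1) / (1 + T m) ≤ 1 := by
      rw [div_le_one hden]; linarith [hg'.2]
    have hlog := half_le_log_one_add_s11 hu0 hu1
    have heq : 1 + g (m + 1) / (1 + T m) = (1 + T (m + 1)) / (1 + T m) := by
      rw [hTk]; field_simp; ring
    rw [heq, Real.log_div (by rw [hTk]; intro h; nlinarith) (by positivity)] at hlog
    linarith
  calc ∑ k ∈ Icc 1 K, g k / (1 + T (k - 1))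
      ≤ ∑ k ∈ Icc 1 K, 2 * (Real.log (1 + T k) - Real.log (1 + T (k - 1))) :=
        Finset.sum_le_sum step
    _ = 2 * ∑ k ∈ Icc 1 K, (Real.log (1 + T k) - Real.log (1 + T (k - 1))) := by
        rw [Finset.mul_sum]
    _ = 2 * (Real.log (1 + T K) - Real.log (1 + T 0)) := by
        congr 1
        rw [← Finset.Ico_add_one_right_eq_Icc, Finset.sum_Ico_eq_sum_range]
        have hKK : K + 1 - 1 = K := by omega
        rw [hKK]
        have h := Finset.sum_range_sub (fun i => Real.log (1 + T i)) K
        rw [← h]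
        apply Finset.sum_congr rfl
        intro i _
        have h1 : 1 + i - 1 = i := by omega
        rw [h1, Nat.add_comm 1 i]
    _ ≤ 2 * Real.log (1 + K) := by
        have hT0 : T 0 = 0 := by simp [hT]
        rw [hT0]
        simp only [add_zero, Real.log_one, sub_zero]
        have hTK : T K ≤ K := by
          calc T K ≤ ∑ i ∈ Icc 1 K, (1 : ℝ) :=
                Finset.sum_le_sum (fun i hi => (hg i hi).2)
            _ = K := by simp [Nat.card_Icc]
        have : (0:ℝ) < 1 + T K := by linarith [hTnn K le_rfl]
        gcongr


/-- Term (1) bound (per-context, deterministic form): for probability vectors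
`π_1, …, π_K` on `A`, estimators `f̂_k : A → [0,1]`, true losses `f⋆ : A → [0,1]`,
bonuses `b_k(a) = min{1, (β/2)/(1 + Σ_{i<k} π_i(a))}` and clipped optimistic losses
`ℓ̂_k(a) = max{0, f̂_k(a) − b_k(a)}`,
`Σ_k Σ_a π_k(a) (f⋆(a) − ℓ̂_k(a)) ≤ 1 + 2β|A|log(K+1) + K/(2β)
  + (1/(2β)) Σ_{k=2}^K Σ_{i=1}^{k-1} Σ_a π_i(a) (f⋆(a) − f̂_k(a))²`. -/
theorem term_one_bound {A : Type*} [Fintype A] [Nonempty A] (K : ℕ) (hK : 0 < K)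
    (β : ℝ) (hβ : 0 < β)
    (π : ℕ → A → ℝ)
    (hπ01 : ∀ k ∈ Finset.Icc 1 K, ∀ a, 0 ≤ π k a ∧ π k a ≤ 1)
    (hπsum : ∀ k ∈ Finset.Icc 1 K, ∑ a, π k a = 1)
    (f : ℕ → A → ℝ) (hf : ∀ k ∈ Finset.Icc 1 K, ∀ a, 0 ≤ f k a ∧ f k a ≤ 1)
    (fstar : A → ℝ) (hfstar : ∀ a, 0 ≤ fstar a ∧ fstar a ≤ 1) :
    ∑ k ∈ Finset.Icc 1 K, ∑ a, π k a *
        (fstar a -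
          max 0 (f k a - min 1 ((β / 2) / (1 + ∑ i ∈ Finset.Icc 1 (k - 1), π i a))))
      ≤ 1 + 2 * β * (Fintype.card A) * Real.log (K + 1) + K / (2 * β)
        + (1 / (2 * β)) * ∑ k ∈ Finset.Icc 2 K, ∑ i ∈ Finset.Icc 1 (k - 1), ∑ a,
            π i a * (fstar a - f k a) ^ 2 := by
  classical
  set S : ℕ → A → ℝ := fun m a => ∑ i ∈ Icc 1 m, π i a with hS
  have hSnn : ∀ k ∈ Icc 1 K, ∀ a, 0 ≤ S (k - 1) a := by
    intro k hk a
    simp only [mem_Icc] at hk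
    apply Finset.sum_nonneg
    intro i hi
    simp only [mem_Icc] at hi
    exact (hπ01 i (by simp only [mem_Icc]; omega) a).1
  -- pointwise bound
  have key : ∀ k ∈ Icc 1 K, ∀ a : A,
      π k a * (fstar a - max 0 (f k a - min 1 ((β / 2) / (1 + S (k - 1) a)))) ≤
        β * (π k a / (1 + S (k - 1) a)) + π k a * (fstar a - f k a) ^ 2 / (2 * β)
          + S (k - 1) a * (fstar a - f k a) ^ 2 / (2 * β) := by
    intro k hk a
    obtain ⟨hp0, hp1⟩ := hπ01 k hk a
    have hs0 : 0 ≤ S (k - 1) a := hSnn k hk a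
    set s := S (k - 1) a with hsdef
    set p := π k a with hpdef
    set Δ := fstar a - f k a with hΔ
    have hs1 : (0 : ℝ) < 1 + s := by linarith
    have h1 : fstar a - max 0 (f k a - min 1 ((β / 2) / (1 + s))) ≤
        Δ + (β / 2) / (1 + s) := by
      have := le_max_right 0 (f k a - min 1 ((β / 2) / (1 + s)))
      have := min_le_right 1 ((β / 2) / (1 + s))
      simp only [hΔ]
      linarith
    have h2 : p * (fstar a - max 0 (f k a - min 1 ((β / 2) / (1 + s)))) ≤
        p * (Δ + (β / 2) / (1 + s)) := mul_le_mul_of_nonneg_left h1 hp0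
    have h3 : p * Δ * (2 * β * (1 + s)) ≤
        (β / 2 * (p / (1 + s)) + p * Δ ^ 2 / (2 * β) + s * Δ ^ 2 / (2 * β))
          * (2 * β * (1 + s)) := by
      have e : (β / 2 * (p / (1 + s)) + p * Δ ^ 2 / (2 * β) + s * Δ ^ 2 / (2 * β))
          * (2 * β * (1 + s)) =
            β ^ 2 * p + p * Δ ^ 2 * (1 + s) + s * Δ ^ 2 * (1 + s) := by
        field_simp
      rw [e]
      nlinarith [mul_nonneg hp0 (sq_nonneg (Δ * (1 + s) - β)),
        mul_nonneg (mul_nonneg (mul_nonneg (by linarith : (0:ℝ) ≤ 1 - p) hs0)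
          (sq_nonneg Δ)) hs1.le]
    have h4 : p * Δ ≤ β / 2 * (p / (1 + s)) + p * Δ ^ 2 / (2 * β)
        + s * Δ ^ 2 / (2 * β) :=
      le_of_mul_le_mul_right h3 (by positivity)
    have h5 : p * ((β / 2) / (1 + s)) = β / 2 * (p / (1 + s)) := by ring
    calc p * (fstar a - max 0 (f k a - min 1 ((β / 2) / (1 + s))))
        ≤ p * (Δ + (β / 2) / (1 + s)) := h2
      _ = p * Δ + β / 2 * (p / (1 + s)) := by rw [mul_add, h5]
      _ ≤ β * (p / (1 + s)) + p * Δ ^ 2 / (2 * β) + s * Δ ^ 2 / (2 * β) := by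
          linarith
  -- bound the three sums
  have hA : ∑ k ∈ Icc 1 K, ∑ a, β * (π k a / (1 + S (k - 1) a)) ≤
      2 * β * (Fintype.card A) * Real.log (K + 1) := by
    rw [Finset.sum_comm]
    have : ∀ a : A, ∑ k ∈ Icc 1 K, β * (π k a / (1 + S (k - 1) a)) ≤
        β * (2 * Real.log (1 + K)) := by
      intro a
      rw [← Finset.mul_sum]
      exact mul_le_mul_of_nonneg_left
        (sum_div_le_two_log K (fun k => π k a) (fun k hk => hπ01 k hk a)) hβ.le
    calc ∑ a : A, ∑ k ∈ Icc 1 K, β * (π k a / (1 + S (k - 1) a))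
        ≤ ∑ _a : A, β * (2 * Real.log (1 + K)) := Finset.sum_le_sum fun a _ => this a
      _ = 2 * β * (Fintype.card A) * Real.log (K + 1) := by
          rw [Finset.sum_const, Finset.card_univ, nsmul_eq_mul, add_comm (1:ℝ)]
          ring
  have hB : ∑ k ∈ Icc 1 K, ∑ a, π k a * (fstar a - f k a) ^ 2 / (2 * β) ≤
      K / (2 * β) := by
    have : ∀ k ∈ Icc 1 K, ∑ a, π k a * (fstar a - f k a) ^ 2 / (2 * β)
        ≤ 1 / (2 * β) := by
      intro k hk
      calc ∑ a, π k a * (fstar a - f k a) ^ 2 / (2 * β)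
          = (∑ a, π k a * (fstar a - f k a) ^ 2) / (2 * β) := by
            rw [Finset.sum_div]
        _ ≤ (∑ a, π k a) / (2 * β) := by
            rw [div_le_div_iff_of_pos_right (by linarith : (0:ℝ) < 2 * β)]
            apply Finset.sum_le_sum
            intro a _
            have h1 := (hπ01 k hk a).1
            have h2 := (hf k hk a)
            have h3 := hfstar a
            have hd : (fstar a - f k a) ^ 2 ≤ 1 := by
              nlinarith [h2.1, h2.2, h3.1, h3.2]
            calc π k a * (fstar a - f k a) ^ 2 ≤ π k a * 1 :=
                  mul_le_mul_of_nonneg_left hd h1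
              _ = π k a := mul_one _
        _ = 1 / (2 * β) := by rw [hπsum k hk]
    calc ∑ k ∈ Icc 1 K, ∑ a, π k a * (fstar a - f k a) ^ 2 / (2 * β)
        ≤ ∑ k ∈ Icc 1 K, 1 / (2 * β) := Finset.sum_le_sum this
      _ = K / (2 * β) := by
          rw [Finset.sum_const, Nat.card_Icc, nsmul_eq_mul]
          simp only [Nat.add_sub_cancel]
          ring
  have hC : ∑ k ∈ Icc 1 K, ∑ a, S (k - 1) a * (fstar a - f k a) ^ 2 / (2 * β) =
      (1 / (2 * β)) * ∑ k ∈ Icc 2 K, ∑ i ∈ Icc 1 (k - 1), ∑ a,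
        π i a * (fstar a - f k a) ^ 2 := by
    have hsplit : Icc 1 K = insert 1 (Icc 2 K) := by
      ext x
      simp only [mem_Icc, mem_insert]
      omega
    have hone : (1 : ℕ) ∉ Icc 2 K := by simp
    have hterm : ∀ k, ∑ a, S (k - 1) a * (fstar a - f k a) ^ 2 / (2 * β) =
        (1 / (2 * β)) * ∑ i ∈ Icc 1 (k - 1), ∑ a, π i a * (fstar a - f k a) ^ 2 := by
      intro k
      calc ∑ a, S (k - 1) a * (fstar a - f k a) ^ 2 / (2 * β)
          = ∑ a, ∑ i ∈ Icc 1 (k - 1), π i a * (fstar a - f k a) ^ 2 / (2 * β) := by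
            apply Finset.sum_congr rfl
            intro a _
            rw [hS]
            simp only
            rw [Finset.sum_mul, Finset.sum_div]
        _ = ∑ i ∈ Icc 1 (k - 1), ∑ a, π i a * (fstar a - f k a) ^ 2 / (2 * β) :=
            Finset.sum_comm
        _ = (1 / (2 * β)) * ∑ i ∈ Icc 1 (k - 1), ∑ a, π i a * (fstar a - f k a) ^ 2 := by
            rw [Finset.mul_sum]
            apply Finset.sum_congr rfl
            intro i _
            rw [Finset.mul_sum]
            apply Finset.sum_congr rfl
            intro a _
            ring
    rw [hsplit, Finset.sum_insert hone]
    have h1 : ∑ a, S (1 - 1) a * (fstar a - f 1 a) ^ 2 / (2 * β) = 0 := by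
      apply Finset.sum_eq_zero
      intro a _
      rw [hS]
      simp
    rw [h1, zero_add, Finset.mul_sum]
    apply Finset.sum_congr rfl
    intro k _
    exact hterm k
  have main : ∑ k ∈ Finset.Icc 1 K, ∑ a, π k a *
        (fstar a -
          max 0 (f k a - min 1 ((β / 2) / (1 + ∑ i ∈ Finset.Icc 1 (k - 1), π i a))))
      ≤ ∑ k ∈ Icc 1 K, ∑ a, β * (π k a / (1 + S (k - 1) a))
        + ∑ k ∈ Icc 1 K, ∑ a, π k a * (fstar a - f k a) ^ 2 / (2 * β)
        + ∑ k ∈ Icc 1 K, ∑ a, S (k - 1) a * (fstar a - f k a) ^ 2 / (2 * β) := by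
    rw [← Finset.sum_add_distrib, ← Finset.sum_add_distrib]
    apply Finset.sum_le_sum
    intro k hk
    rw [← Finset.sum_add_distrib, ← Finset.sum_add_distrib]
    exact Finset.sum_le_sum fun a _ => key k hk a
  rw [hC] at main
  linarith [hA, hB, main]
end

section
/- Let A be a nonempty finite set, let K be a positive integer, and let β > 0. For each k ∈ {1, …, K} let π_k : A → [0,1] be a probability vector on A and let f̂_k : A → [0,1]; let f⋆ : A → [0,1], and let π⋆ : A → [0,1] be a probability vector on A. Define the exploration bonus b_k(a) = min{1, (β/2)/(1 + Σ_{i=1}^{k-1} π_i(a))} and the clipped optimistic loss ℓ̂_k(a) = max{0, f̂_k(a) − b_k(a)}. Then Σ_{k=1}^K Σ_{a ∈ A} π⋆(a) (ℓ̂_k(a) − f⋆(a)) ≤ 1 + K/(2β) + (1/(2β)) Σ_{k=2}^K Σ_{i=1}^{k-1} Σ_{a ∈ A} π_i(a) (f̂_k(a) − f⋆(a))². -/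
private lemma aux_pt (β S fh fs : ℝ) (hβ : 0 < β) (hS : 0 ≤ S)
    (hfh1 : fh ≤ 1) (hfs0 : 0 ≤ fs) :
    max 0 (fh - min 1 (β / 2 / (1 + S))) - fs
      ≤ (1 / (2 * β)) * ((1 + S) * (fh - fs) ^ 2) := by
  have h1 : (0:ℝ) < 1 + S := by linarith
  have hY : 0 ≤ (1 / (2 * β)) * ((1 + S) * (fh - fs) ^ 2) := by positivity
  rw [sub_le_iff_le_add]
  apply max_le
  · linarith
  · rcases le_or_gt 1 (β / 2 / (1 + S)) with h | h
    · rw [min_eq_left h]; linarith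
    · rw [min_eq_right h.le]
      have key : β / 2 / (1 + S) + (1 / (2 * β)) * ((1 + S) * (fh - fs) ^ 2) - (fh - fs)
          = ((1 + S) * (fh - fs) - β) ^ 2 / (2 * β * (1 + S)) := by
        field_simp; ring
      have h2 : 0 ≤ ((1 + S) * (fh - fs) - β) ^ 2 / (2 * β * (1 + S)) := by positivity
      linarith [key ▸ h2]

/-- Term (3) bound (per-context, deterministic form): for probability vectors
`π_1, …, π_K` and `π⋆` on `A`, estimators `f̂_k : A → [0,1]`, true losses `f⋆ : A → [0,1]`,
bonuses `b_k(a) = min{1, (β/2)/(1 + Σ_{i<k} π_i(a))}` and clipped optimistic losses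
`ℓ̂_k(a) = max{0, f̂_k(a) − b_k(a)}`,
`Σ_k Σ_a π⋆(a) (ℓ̂_k(a) − f⋆(a)) ≤ 1 + K/(2β)
  + (1/(2β)) Σ_{k=2}^K Σ_{i=1}^{k-1} Σ_a π_i(a) (f̂_k(a) − f⋆(a))²`. -/
theorem term_three_bound {A : Type*} [Fintype A] [Nonempty A] (K : ℕ) (hK : 0 < K)
    (β : ℝ) (hβ : 0 < β)
    (π : ℕ → A → ℝ)
    (hπ01 : ∀ k ∈ Finset.Icc 1 K, ∀ a, 0 ≤ π k a ∧ π k a ≤ 1)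
    (hπsum : ∀ k ∈ Finset.Icc 1 K, ∑ a, π k a = 1)
    (f : ℕ → A → ℝ) (hf : ∀ k ∈ Finset.Icc 1 K, ∀ a, 0 ≤ f k a ∧ f k a ≤ 1)
    (fstar : A → ℝ) (hfstar : ∀ a, 0 ≤ fstar a ∧ fstar a ≤ 1)
    (πs : A → ℝ) (hπs : ∀ a, 0 ≤ πs a ∧ πs a ≤ 1) (hπssum : ∑ a, πs a = 1) :
    ∑ k ∈ Finset.Icc 1 K, ∑ a, πs a *
        (max 0 (f k a - min 1 ((β / 2) / (1 + ∑ i ∈ Finset.Icc 1 (k - 1), π i a)))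
          - fstar a)
      ≤ 1 + K / (2 * β)
        + (1 / (2 * β)) * ∑ k ∈ Finset.Icc 2 K, ∑ i ∈ Finset.Icc 1 (k - 1), ∑ a,
            π i a * (f k a - fstar a) ^ 2 := by
  set T : ℕ → ℝ := fun k => ∑ i ∈ Finset.Icc 1 (k - 1), ∑ a, π i a * (f k a - fstar a) ^ 2
    with hT
  have step1 : ∑ k ∈ Finset.Icc 1 K, ∑ a, πs a *
        (max 0 (f k a - min 1 ((β / 2) / (1 + ∑ i ∈ Finset.Icc 1 (k - 1), π i a)))
          - fstar a)
      ≤ ∑ k ∈ Finset.Icc 1 K, (1 / (2 * β)) * (1 + T k) := by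
    apply Finset.sum_le_sum
    intro k hk
    have hkmem : ∀ i ∈ Finset.Icc 1 (k - 1), i ∈ Finset.Icc 1 K := by
      intro i hi
      simp only [Finset.mem_Icc] at *
      omega
    have hSnn : ∀ a, 0 ≤ ∑ i ∈ Finset.Icc 1 (k - 1), π i a := by
      intro a
      exact Finset.sum_nonneg fun i hi => (hπ01 i (hkmem i hi) a).1
    calc ∑ a, πs a *
          (max 0 (f k a - min 1 ((β / 2) / (1 + ∑ i ∈ Finset.Icc 1 (k - 1), π i a)))
            - fstar a)
        ≤ ∑ a, πs a * ((1 / (2 * β)) *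
            ((1 + ∑ i ∈ Finset.Icc 1 (k - 1), π i a) * (f k a - fstar a) ^ 2)) := by
          apply Finset.sum_le_sum
          intro a _
          exact mul_le_mul_of_nonneg_left
            (aux_pt β _ (f k a) (fstar a) hβ (hSnn a) (hf k hk a).2 (hfstar a).1)
            (hπs a).1
      _ = (1 / (2 * β)) * (∑ a, πs a * (f k a - fstar a) ^ 2
            + ∑ a, ∑ i ∈ Finset.Icc 1 (k - 1), πs a * (π i a * (f k a - fstar a) ^ 2)) := by
          rw [← Finset.sum_add_distrib, Finset.mul_sum]
          congr 1
          ext a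
          have hs : πs a * ((∑ i ∈ Finset.Icc 1 (k - 1), π i a) * (f k a - fstar a) ^ 2)
              = ∑ i ∈ Finset.Icc 1 (k - 1), πs a * (π i a * (f k a - fstar a) ^ 2) := by
            rw [Finset.sum_mul, Finset.mul_sum]
          rw [← hs]
          ring
      _ ≤ (1 / (2 * β)) * (1 + T k) := by
          apply mul_le_mul_of_nonneg_left _ (by positivity)
          have h1 : ∑ a, πs a * (f k a - fstar a) ^ 2 ≤ 1 := by
            rw [← hπssum]
            apply Finset.sum_le_sum
            intro a _
            have hfa := hf k hk a
            have hsa := hfstar a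
            have hΔ : (f k a - fstar a) ^ 2 ≤ 1 := by
              nlinarith [hfa.1, hfa.2, hsa.1, hsa.2]
            nlinarith [mul_le_mul_of_nonneg_left hΔ (hπs a).1, (hπs a).2]
          have h2 : ∑ a, ∑ i ∈ Finset.Icc 1 (k - 1), πs a * (π i a * (f k a - fstar a) ^ 2)
              ≤ T k := by
            rw [hT, Finset.sum_comm]
            apply Finset.sum_le_sum
            intro i hi
            apply Finset.sum_le_sum
            intro a _
            have h3 : 0 ≤ π i a * (f k a - fstar a) ^ 2 :=
              mul_nonneg (hπ01 i (hkmem i hi) a).1 (sq_nonneg _)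
            nlinarith [(hπs a).1, (hπs a).2, h3]
          linarith
  have step2 : ∑ k ∈ Finset.Icc 1 K, (1 / (2 * β)) * (1 + T k)
      = K / (2 * β) + (1 / (2 * β)) * ∑ k ∈ Finset.Icc 1 K, T k := by
    rw [← Finset.mul_sum, Finset.sum_add_distrib, Finset.sum_const, Nat.card_Icc]
    simp
    ring
  have step3 : ∑ k ∈ Finset.Icc 1 K, T k = ∑ k ∈ Finset.Icc 2 K, T k := by
    have hins : Finset.Icc 1 K = insert 1 (Finset.Icc 2 K) := by
      ext x
      simp only [Finset.mem_Icc, Finset.mem_insert]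
      omega
    rw [hins, Finset.sum_insert (by simp)]
    simp [hT]
  have hTnn : 0 ≤ ∑ k ∈ Finset.Icc 2 K, T k := by
    apply Finset.sum_nonneg
    intro k hk
    apply Finset.sum_nonneg
    intro i hi
    apply Finset.sum_nonneg
    intro a _
    have hikK : i ∈ Finset.Icc 1 K := by
      simp only [Finset.mem_Icc] at *
      omega
    exact mul_nonneg (hπ01 i hikK a).1 (sq_nonneg _)
  calc _ ≤ ∑ k ∈ Finset.Icc 1 K, (1 / (2 * β)) * (1 + T k) := step1
    _ = K / (2 * β) + (1 / (2 * β)) * ∑ k ∈ Finset.Icc 2 K, T k := by rw [step2, step3]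
    _ ≤ 1 + K / (2 * β) + (1 / (2 * β)) * ∑ k ∈ Finset.Icc 2 K, T k := by linarith
end

section
/- Let A be a finite set with |A| ≥ 2, let K be a positive integer, let β > 0, and let E ≥ 0. Let f⋆ : A → [0,1], and for each k ∈ {1, …, K} let f̂_k : A → [0,1]. Set η = √(2 log|A| / K), and define recursively: π_1 is the uniform distribution on A; the exploration bonus b_k(a) = min{1, (β/2)/(1 + Σ_{i=1}^{k-1} π_i(a))}; the clipped optimistic loss ℓ̂_k(a) = max{0, f̂_k(a) − b_k(a)}; and π_{k+1}(a) = π_k(a) exp(−η ℓ̂_k(a)) / Σ_{a' ∈ A} π_k(a') exp(−η ℓ̂_k(a')). Assume that for every k ∈ {2, …, K}, Σ_{i=1}^{k-1} Σ_{a ∈ A} π_i(a) (f̂_k(a) − f⋆(a))² ≤ E. Then for every probability vector π⋆ on A, Σ_{k=1}^K Σ_{a ∈ A} (π_k(a) − π⋆(a)) f⋆(a) ≤ 2 + 2 β |A| log(K + 1) + K/β + K E / β + √(2 K log|A|). -/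
lemma aux_exp_neg_le {x : ℝ} (hx : 0 ≤ x) : Real.exp (-x) ≤ 1 - x + x ^ 2 / 2 := by
  have h := Real.sum_le_exp_of_nonneg hx 3
  have h3 : (1 : ℝ) + x + x ^ 2 / 2 ≤ Real.exp x := by
    simpa [Finset.sum_range_succ, Nat.factorial] using h
  have hpos : (0:ℝ) < 1 + x + x ^ 2 / 2 := by positivity
  have h1 : (Real.exp x)⁻¹ ≤ (1 + x + x ^ 2 / 2)⁻¹ := inv_anti₀ hpos h3
  have h2 : (1 + x + x ^ 2 / 2)⁻¹ ≤ 1 - x + x ^ 2 / 2 := by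
    rw [inv_eq_one_div, div_le_iff₀ hpos]
    nlinarith [sq_nonneg x, sq_nonneg (x ^ 2)]
  rw [Real.exp_neg]
  linarith

lemma aux_sub_le_sq_div {x b : ℝ} (hb : 0 < b) : x - b ≤ x ^ 2 / (4 * b) := by
  rw [le_div_iff₀ (by linarith)]
  nlinarith [sq_nonneg (x - 2 * b)]

set_option maxHeartbeats 1000000 in
/-- Per-context regret guarantee of the OPO-CMAB update rule, conditional on the cumulative
squared prediction error being at most `E` at every round: for `π_1` uniform,
`b_k(a) = min{1, (β/2)/(1 + Σ_{i<k} π_i(a))}`, `ℓ̂_k(a) = max{0, f̂_k(a) − b_k(a)}`,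
`π_{k+1}(a) ∝ π_k(a) exp(−η ℓ̂_k(a))` with `η = √(2 log|A| / K)`, and
`Σ_{i=1}^{k-1} Σ_a π_i(a)(f̂_k(a) − f⋆(a))² ≤ E` for all `k ∈ {2,…,K}`, we have for
every probability vector `π⋆`:
`Σ_{k=1}^K Σ_a (π_k(a) − π⋆(a)) f⋆(a)
  ≤ 2 + 2β|A|log(K+1) + K/β + KE/β + √(2K log|A|)`. -/
theorem opo_cmab_per_context_regret {A : Type*} [Fintype A] (hA : 2 ≤ Fintype.card A)
    (K : ℕ) (hK : 0 < K) (β : ℝ) (hβ : 0 < β) (E : ℝ) (hE : 0 ≤ E)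
    (fstar : A → ℝ) (hfstar : ∀ a, 0 ≤ fstar a ∧ fstar a ≤ 1)
    (f : ℕ → A → ℝ) (hf : ∀ k ∈ Finset.Icc 1 K, ∀ a, 0 ≤ f k a ∧ f k a ≤ 1)
    (η : ℝ) (hη : η = Real.sqrt (2 * Real.log (Fintype.card A) / K))
    (π : ℕ → A → ℝ)
    (hπ1 : ∀ a, π 1 a = 1 / Fintype.card A)
    (hπrec : ∀ k ∈ Finset.Icc 1 K, ∀ a,
      π (k + 1) a =
        π k a * Real.exp (-η * max 0 (f k a -
            min 1 ((β / 2) / (1 + ∑ i ∈ Finset.Icc 1 (k - 1), π i a)))) /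
          ∑ a', π k a' * Real.exp (-η * max 0 (f k a' -
            min 1 ((β / 2) / (1 + ∑ i ∈ Finset.Icc 1 (k - 1), π i a')))))
    (hErr : ∀ k ∈ Finset.Icc 2 K,
      ∑ i ∈ Finset.Icc 1 (k - 1), ∑ a, π i a * (f k a - fstar a) ^ 2 ≤ E)
    (πs : A → ℝ) (hπs : ∀ a, 0 ≤ πs a ∧ πs a ≤ 1) (hπssum : ∑ a, πs a = 1) :
    ∑ k ∈ Finset.Icc 1 K, ∑ a, (π k a - πs a) * fstar a
      ≤ 2 + 2 * β * (Fintype.card A) * Real.log (K + 1) + K / β + K * E / β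
        + Real.sqrt (2 * K * Real.log (Fintype.card A)) := by
  classical
  have hne : Nonempty A := by
    have : 0 < Fintype.card A := by omega
    exact Fintype.card_pos_iff.mp this
  have hcard1 : (1:ℝ) < Fintype.card A := by exact_mod_cast lt_of_lt_of_le one_lt_two hA
  set L : ℝ := Real.log (Fintype.card A) with hLdef
  have hLpos : 0 < L := Real.log_pos hcard1
  have hKpos : (0:ℝ) < K := by exact_mod_cast hK
  have hηpos : 0 < η := by rw [hη]; positivity
  have hηsq : η ^ 2 = 2 * L / K := by
    rw [hη]; exact Real.sq_sqrt (by positivity)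
  set N : ℕ → A → ℝ := fun k a => ∑ i ∈ Finset.Icc 1 (k - 1), π i a with hNdef
  set b : ℕ → A → ℝ := fun k a => min 1 (β / 2 / (1 + N k a)) with hbdef
  set l : ℕ → A → ℝ := fun k a => max 0 (f k a - b k a) with hldef
  set Z : ℕ → ℝ := fun k => ∑ a', π k a' * Real.exp (-η * l k a') with hZdef
  have hrec : ∀ k ∈ Finset.Icc 1 K, ∀ a,
      π (k + 1) a = π k a * Real.exp (-η * l k a) / Z k := hπrec
  -- probability vector facts
  have hprob : ∀ k, 1 ≤ k → k ≤ K + 1 → ((∀ a, 0 < π k a) ∧ ∑ a, π k a = 1) := by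
    intro k hk1
    induction k, hk1 using Nat.le_induction with
    | base =>
      intro _
      have hcpos : (0:ℝ) < Fintype.card A := by positivity
      constructor
      · intro a; rw [hπ1 a]; positivity
      · simp only [hπ1, Finset.sum_const, Finset.card_univ, nsmul_eq_mul]
        field_simp
    | succ n hn ih =>
      intro hle
      obtain ⟨ihpos, ihsum⟩ := ih (by omega)
      have hmem : n ∈ Finset.Icc 1 K := Finset.mem_Icc.mpr ⟨hn, by omega⟩
      have hZpos : 0 < Z n :=
        Finset.sum_pos (fun a _ => mul_pos (ihpos a) (Real.exp_pos _)) Finset.univ_nonempty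
      constructor
      · intro a
        rw [hrec n hmem a]
        exact div_pos (mul_pos (ihpos a) (Real.exp_pos _)) hZpos
      · calc ∑ a, π (n+1) a = ∑ a, π n a * Real.exp (-η * l n a) / Z n :=
              Finset.sum_congr rfl fun a _ => hrec n hmem a
          _ = Z n / Z n := by rw [← Finset.sum_div]
          _ = 1 := div_self (ne_of_gt hZpos)
  have hπpos : ∀ k, 1 ≤ k → k ≤ K + 1 → ∀ a, 0 < π k a := fun k h1 h2 => (hprob k h1 h2).1
  have hπsum : ∀ k, 1 ≤ k → k ≤ K + 1 → ∑ a, π k a = 1 := fun k h1 h2 => (hprob k h1 h2).2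
  have hπle1 : ∀ k, 1 ≤ k → k ≤ K + 1 → ∀ a, π k a ≤ 1 := by
    intro k h1 h2 a
    rw [← hπsum k h1 h2]
    exact Finset.single_le_sum (fun a' _ => le_of_lt (hπpos k h1 h2 a')) (Finset.mem_univ a)
  have hZpos : ∀ k ∈ Finset.Icc 1 K, 0 < Z k := by
    intro k hk
    obtain ⟨h1, h2⟩ := Finset.mem_Icc.mp hk
    exact Finset.sum_pos (fun a _ => mul_pos (hπpos k h1 (by omega) a) (Real.exp_pos _))
      Finset.univ_nonempty
  have hNnonneg : ∀ k, k ≤ K + 1 → ∀ a, 0 ≤ N k a := by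
    intro k hk a
    apply Finset.sum_nonneg
    intro i hi
    obtain ⟨h1, h2⟩ := Finset.mem_Icc.mp hi
    exact le_of_lt (hπpos i h1 (by omega) a)
  have hSpos : ∀ k, k ≤ K + 1 → ∀ a, 0 < 1 + N k a := by
    intro k hk a; have := hNnonneg k hk a; linarith
  have hb01 : ∀ k, k ≤ K + 1 → ∀ a, 0 < b k a ∧ b k a ≤ 1 := by
    intro k hk a
    constructor
    · apply lt_min one_pos
      exact div_pos (by positivity) (hSpos k hk a)
    · exact min_le_left _ _
  have hl01 : ∀ k ∈ Finset.Icc 1 K, ∀ a, 0 ≤ l k a ∧ l k a ≤ 1 := by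
    intro k hk a
    have hkK : k ≤ K + 1 := le_trans (Finset.mem_Icc.mp hk).2 (Nat.le_succ K)
    obtain ⟨hb0, _⟩ := hb01 k hkK a
    have hf1 := (hf k hk a).2
    exact ⟨le_max_left _ _, max_le zero_le_one (by linarith)⟩
  -- per-round bound on log of the normalizing constant
  have hZlog : ∀ k ∈ Finset.Icc 1 K,
      Real.log (Z k) ≤ -(η * ∑ a, π k a * l k a) + η ^ 2 / 2 := by
    intro k hk
    obtain ⟨hk1, hk2⟩ := Finset.mem_Icc.mp hk
    have hkK : k ≤ K + 1 := by omega
    have hstep : Z k ≤ ∑ a, π k a * (1 - η * l k a + (η * l k a) ^ 2 / 2) := by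
      apply Finset.sum_le_sum
      intro a _
      apply mul_le_mul_of_nonneg_left _ (le_of_lt (hπpos k hk1 hkK a))
      have h0 : 0 ≤ η * l k a := mul_nonneg (le_of_lt hηpos) (hl01 k hk a).1
      rw [neg_mul]
      exact aux_exp_neg_le h0
    have hexpand : ∑ a, π k a * (1 - η * l k a + (η * l k a) ^ 2 / 2)
        = (∑ a, π k a) - η * (∑ a, π k a * l k a)
          + η ^ 2 / 2 * (∑ a, π k a * (l k a) ^ 2) := by
      rw [Finset.mul_sum, Finset.mul_sum, ← Finset.sum_sub_distrib, ← Finset.sum_add_distrib]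
      exact Finset.sum_congr rfl fun a _ => by ring
    have hsq : ∑ a, π k a * (l k a) ^ 2 ≤ 1 := by
      rw [← hπsum k hk1 hkK]
      apply Finset.sum_le_sum
      intro a _
      have h1 := (hl01 k hk a).1
      have h2 := (hl01 k hk a).2
      have hp := le_of_lt (hπpos k hk1 hkK a)
      nlinarith [mul_nonneg (mul_nonneg hp (by linarith : (0:ℝ) ≤ 1 - l k a))
        (by linarith : (0:ℝ) ≤ 1 + l k a)]
    rw [hexpand, hπsum k hk1 hkK] at hstep
    have hlog := Real.log_le_sub_one_of_pos (hZpos k hk)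
    nlinarith [sq_nonneg η]
  -- telescoping the log of the weights
  have hlogpi : ∀ a, Real.log (π (K + 1) a) =
      Real.log (π 1 a) - ∑ k ∈ Finset.Icc 1 K, (η * l k a + Real.log (Z k)) := by
    intro a
    have main : ∀ m, m ≤ K → Real.log (π (m + 1) a) =
        Real.log (π 1 a) - ∑ k ∈ Finset.Icc 1 m, (η * l k a + Real.log (Z k)) := by
      intro m
      induction m with
      | zero => intro _; simp
      | succ n ih =>
        intro hm
        have hmem : n + 1 ∈ Finset.Icc 1 K := Finset.mem_Icc.mpr ⟨by omega, by omega⟩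
        have hp : 0 < π (n + 1) a := hπpos (n + 1) (by omega) (by omega) a
        have hz : 0 < Z (n + 1) := hZpos (n + 1) hmem
        rw [hrec (n + 1) hmem a,
          Real.log_div (mul_ne_zero (ne_of_gt hp) (Real.exp_ne_zero _)) (ne_of_gt hz),
          Real.log_mul (ne_of_gt hp) (Real.exp_ne_zero _), Real.log_exp,
          Finset.sum_Icc_succ_top (by omega : 1 ≤ n + 1), ih (by omega)]
        ring
    exact main K le_rfl
  -- exponential weights regret bound
  have hEW : ∑ k ∈ Finset.Icc 1 K, ((∑ a, π k a * l k a) - ∑ a, πs a * l k a)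
      ≤ Real.sqrt (2 * K * L) := by
    have ha : ∀ a, -L - ∑ k ∈ Finset.Icc 1 K, Real.log (Z k)
        ≤ ∑ k ∈ Finset.Icc 1 K, η * l k a := by
      intro a
      have h1 : Real.log (π (K + 1) a) ≤ 0 :=
        Real.log_nonpos (le_of_lt (hπpos (K + 1) (by omega) (by omega) a))
          (hπle1 (K + 1) (by omega) (by omega) a)
      have h2 : Real.log (π 1 a) = -L := by
        rw [hπ1 a, one_div, Real.log_inv, hLdef]
      have h3 := hlogpi a
      rw [Finset.sum_add_distrib] at h3
      linarith
    have hsum : -L - ∑ k ∈ Finset.Icc 1 K, Real.log (Z k)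
        ≤ η * ∑ k ∈ Finset.Icc 1 K, ∑ a, πs a * l k a := by
      have e1 : ∑ a, πs a * (-L - ∑ k ∈ Finset.Icc 1 K, Real.log (Z k))
          = -L - ∑ k ∈ Finset.Icc 1 K, Real.log (Z k) := by
        rw [← Finset.sum_mul, hπssum, one_mul]
      have e2 : ∑ a, πs a * (∑ k ∈ Finset.Icc 1 K, η * l k a)
          = η * ∑ k ∈ Finset.Icc 1 K, ∑ a, πs a * l k a := by
        calc ∑ a, πs a * (∑ k ∈ Finset.Icc 1 K, η * l k a)
            = ∑ a, ∑ k ∈ Finset.Icc 1 K, η * (πs a * l k a) := by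
              refine Finset.sum_congr rfl fun a _ => ?_
              rw [Finset.mul_sum]
              exact Finset.sum_congr rfl fun k _ => by ring
          _ = ∑ k ∈ Finset.Icc 1 K, ∑ a, η * (πs a * l k a) := Finset.sum_comm
          _ = η * ∑ k ∈ Finset.Icc 1 K, ∑ a, πs a * l k a := by
              rw [Finset.mul_sum]
              exact Finset.sum_congr rfl fun k _ => (Finset.mul_sum _ _ _).symm
      rw [← e1, ← e2]
      exact Finset.sum_le_sum fun a _ =>
        mul_le_mul_of_nonneg_left (ha a) (hπs a).1
    have hKcard : (Finset.Icc 1 K).card = K := by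
      rw [Nat.card_Icc]; omega
    have hZsum : ∑ k ∈ Finset.Icc 1 K, Real.log (Z k)
        ≤ -(η * ∑ k ∈ Finset.Icc 1 K, ∑ a, π k a * l k a) + K * (η ^ 2 / 2) := by
      calc ∑ k ∈ Finset.Icc 1 K, Real.log (Z k)
          ≤ ∑ k ∈ Finset.Icc 1 K, (-(η * ∑ a, π k a * l k a) + η ^ 2 / 2) :=
            Finset.sum_le_sum hZlog
        _ = -(η * ∑ k ∈ Finset.Icc 1 K, ∑ a, π k a * l k a) + K * (η ^ 2 / 2) := by
            rw [Finset.sum_add_distrib, Finset.sum_neg_distrib, ← Finset.mul_sum,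
              Finset.sum_const, hKcard, nsmul_eq_mul]
    have hKη : (K : ℝ) * (η ^ 2 / 2) = L := by
      rw [hηsq]; field_simp
    have hsqrt : η * Real.sqrt (2 * K * L) = 2 * L := by
      rw [hη, ← Real.sqrt_mul (by positivity)]
      have e : (2 * L / (K:ℝ)) * (2 * K * L) = (2 * L) ^ 2 := by
        field_simp
      rw [e, Real.sqrt_sq (by positivity)]
    have hdist : ∑ k ∈ Finset.Icc 1 K, ((∑ a, π k a * l k a) - ∑ a, πs a * l k a)
        = (∑ k ∈ Finset.Icc 1 K, ∑ a, π k a * l k a)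
          - ∑ k ∈ Finset.Icc 1 K, ∑ a, πs a * l k a := Finset.sum_sub_distrib _ _
    rw [hdist]
    have key : η * ((∑ k ∈ Finset.Icc 1 K, ∑ a, π k a * l k a)
        - ∑ k ∈ Finset.Icc 1 K, ∑ a, πs a * l k a) ≤ η * Real.sqrt (2 * K * L) := by
      rw [hsqrt]; nlinarith
    exact le_of_mul_le_mul_left (by linarith [key]) hηpos
  -- bonus bound via telescoping logarithms
  have hbonusa : ∀ a, ∑ k ∈ Finset.Icc 1 K, π k a * b k a ≤ β * Real.log ((K:ℝ) + 1) := by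
    intro a
    set G : ℕ → ℝ := fun j => Real.log (1 + ∑ i ∈ Finset.Icc 1 j, π i a) with hGdef
    have hstep : ∀ k ∈ Finset.Icc 1 K, π k a * b k a ≤ β * (G k - G (k - 1)) := by
      intro k hk
      obtain ⟨hk1, hk2⟩ := Finset.mem_Icc.mp hk
      obtain ⟨m, rfl⟩ : ∃ m, k = m + 1 := ⟨k - 1, by omega⟩
      have hS : 0 < 1 + N (m + 1) a := hSpos (m + 1) (by omega) a
      have hx0 : 0 < π (m + 1) a := hπpos (m + 1) hk1 (by omega) a
      have hx1 : π (m + 1) a ≤ 1 := hπle1 (m + 1) hk1 (by omega) a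
      have hN0 : 0 ≤ N (m + 1) a := hNnonneg (m + 1) (by omega) a
      have hNm : N (m + 1) a = ∑ i ∈ Finset.Icc 1 m, π i a := by
        simp [hNdef]
      have hsplit : (∑ i ∈ Finset.Icc 1 (m + 1), π i a) = N (m + 1) a + π (m + 1) a := by
        rw [Finset.sum_Icc_succ_top (by omega : 1 ≤ m + 1), hNm]
      have hGm1 : G (m + 1) = Real.log ((1 + N (m + 1) a) + π (m + 1) a) := by
        simp only [hGdef, hsplit]; ring_nf
      have hGm : G ((m + 1) - 1) = Real.log (1 + N (m + 1) a) := by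
        simp only [hGdef, Nat.add_sub_cancel, hNm]
      have hSx : 0 < (1 + N (m + 1) a) + π (m + 1) a := by linarith
      have hlogstep : π (m + 1) a / ((1 + N (m + 1) a) + π (m + 1) a)
          ≤ G (m + 1) - G ((m + 1) - 1) := by
        have h := Real.log_le_sub_one_of_pos
          (show 0 < (1 + N (m + 1) a) / ((1 + N (m + 1) a) + π (m + 1) a) from
            div_pos hS hSx)
        rw [Real.log_div (ne_of_gt hS) (ne_of_gt hSx)] at h
        have hdivIneq : (1 + N (m + 1) a) / ((1 + N (m + 1) a) + π (m + 1) a) - 1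
            = -(π (m + 1) a / ((1 + N (m + 1) a) + π (m + 1) a)) := by
          field_simp
          ring
        rw [hGm1, hGm]
        rw [hdivIneq] at h
        linarith
      have hfrac : π (m + 1) a / (1 + N (m + 1) a)
          ≤ 2 * (π (m + 1) a / ((1 + N (m + 1) a) + π (m + 1) a)) := by
        rw [div_le_iff₀ hS]
        have h2 : π (m + 1) a / ((1 + N (m + 1) a) + π (m + 1) a)
            * ((1 + N (m + 1) a) + π (m + 1) a) = π (m + 1) a := by
          field_simp
        have h3 : 0 ≤ π (m + 1) a / ((1 + N (m + 1) a) + π (m + 1) a) :=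
          le_of_lt (div_pos hx0 hSx)
        nlinarith
      have hbk : π (m + 1) a * b (m + 1) a ≤ π (m + 1) a * (β / 2 / (1 + N (m + 1) a)) :=
        mul_le_mul_of_nonneg_left (min_le_right _ _) (le_of_lt hx0)
      have heq2 : π (m + 1) a * (β / 2 / (1 + N (m + 1) a))
          = (β / 2) * (π (m + 1) a / (1 + N (m + 1) a)) := by ring
      calc π (m + 1) a * b (m + 1) a
          ≤ (β / 2) * (π (m + 1) a / (1 + N (m + 1) a)) := by rw [← heq2]; exact hbk
        _ ≤ (β / 2) * (2 * (π (m + 1) a / ((1 + N (m + 1) a) + π (m + 1) a))) :=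
            mul_le_mul_of_nonneg_left hfrac (by positivity)
        _ = β * (π (m + 1) a / ((1 + N (m + 1) a) + π (m + 1) a)) := by ring
        _ ≤ β * (G (m + 1) - G ((m + 1) - 1)) :=
            mul_le_mul_of_nonneg_left hlogstep (le_of_lt hβ)
    have htel : ∑ k ∈ Finset.Icc 1 K, (G k - G (k - 1)) = G K - G 0 := by
      rw [← Finset.Ico_add_one_right_eq_Icc, Finset.sum_Ico_eq_sum_range]
      have hKK : K + 1 - 1 = K := by omega
      rw [hKK]
      have hcongr : ∀ i ∈ Finset.range K, G (1 + i) - G (1 + i - 1) = G (i + 1) - G i := by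
        intro i _
        congr 1
        · congr 1; omega
        · congr 1; omega
      rw [Finset.sum_congr rfl hcongr, Finset.sum_range_sub]
    have hG0 : G 0 = 0 := by simp [hGdef]
    have hGK : G K ≤ Real.log ((K:ℝ) + 1) := by
      have hsum : ∑ i ∈ Finset.Icc 1 K, π i a ≤ K := by
        calc ∑ i ∈ Finset.Icc 1 K, π i a ≤ ∑ i ∈ Finset.Icc 1 K, 1 :=
            Finset.sum_le_sum fun i hi => by
              obtain ⟨h1, h2⟩ := Finset.mem_Icc.mp hi
              exact hπle1 i h1 (by omega) a
          _ = K := by rw [Finset.sum_const, Nat.card_Icc, nsmul_eq_mul]; push_cast; ring_nf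
      have hpos : 0 < 1 + ∑ i ∈ Finset.Icc 1 K, π i a := by
        have : 0 ≤ ∑ i ∈ Finset.Icc 1 K, π i a :=
          Finset.sum_nonneg fun i hi => by
            obtain ⟨h1, h2⟩ := Finset.mem_Icc.mp hi
            exact le_of_lt (hπpos i h1 (by omega) a)
        linarith
      simp only [hGdef]
      exact Real.log_le_log hpos (by linarith)
    calc ∑ k ∈ Finset.Icc 1 K, π k a * b k a
        ≤ ∑ k ∈ Finset.Icc 1 K, β * (G k - G (k - 1)) := Finset.sum_le_sum hstep
      _ = β * (G K - G 0) := by rw [← Finset.mul_sum, htel]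
      _ = β * G K := by rw [hG0]; ring
      _ ≤ β * Real.log ((K:ℝ) + 1) := mul_le_mul_of_nonneg_left hGK (le_of_lt hβ)
  have hbonus : ∑ k ∈ Finset.Icc 1 K, ∑ a, π k a * b k a
      ≤ β * (Fintype.card A) * Real.log ((K:ℝ) + 1) := by
    rw [Finset.sum_comm]
    calc ∑ a, ∑ k ∈ Finset.Icc 1 K, π k a * b k a
        ≤ ∑ _a : A, β * Real.log ((K:ℝ) + 1) := Finset.sum_le_sum fun a _ => hbonusa a
      _ = (Fintype.card A) * (β * Real.log ((K:ℝ) + 1)) := by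
          rw [Finset.sum_const, Finset.card_univ, nsmul_eq_mul]
      _ = β * (Fintype.card A) * Real.log ((K:ℝ) + 1) := by ring
  -- cumulative error bound restated
  have hNErr : ∀ k ∈ Finset.Icc 1 K, ∑ a, N k a * (f k a - fstar a) ^ 2 ≤ E := by
    intro k hk
    obtain ⟨hk1, hk2⟩ := Finset.mem_Icc.mp hk
    have heq : ∑ a, N k a * (f k a - fstar a) ^ 2
        = ∑ i ∈ Finset.Icc 1 (k - 1), ∑ a, π i a * (f k a - fstar a) ^ 2 := by
      calc ∑ a, N k a * (f k a - fstar a) ^ 2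
          = ∑ a, ∑ i ∈ Finset.Icc 1 (k - 1), π i a * (f k a - fstar a) ^ 2 :=
            Finset.sum_congr rfl fun a _ => by
              simp only [hNdef]; exact Finset.sum_mul _ _ _
        _ = _ := Finset.sum_comm
    rw [heq]
    rcases Nat.lt_or_ge k 2 with h2 | h2
    · have hk1' : k = 1 := by omega
      subst hk1'
      simp [hE]
    · exact hErr k (Finset.mem_Icc.mpr ⟨h2, hk2⟩)
  -- pointwise optimism bounds
  have hpoint2 : ∀ k ∈ Finset.Icc 1 K, ∀ a,
      l k a - fstar a ≤ (1 + N k a) * (f k a - fstar a) ^ 2 / (2 * β) := by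
    intro k hk a
    obtain ⟨hk1, hk2⟩ := Finset.mem_Icc.mp hk
    have hS : 0 < 1 + N k a := hSpos k (by omega) a
    have hf0 := (hf k hk a).1
    have hf1 := (hf k hk a).2
    have hfs0 := (hfstar a).1
    have hfs1 := (hfstar a).2
    have hRHS : 0 ≤ (1 + N k a) * (f k a - fstar a) ^ 2 / (2 * β) := by positivity
    rcases min_cases 1 (β / 2 / (1 + N k a)) with ⟨hmin, hle⟩ | ⟨hmin, hlt⟩
    · -- b k a = 1
      have hbk : b k a = 1 := hmin
      have hl0 : l k a = 0 := by
        have : f k a - b k a ≤ 0 := by rw [hbk]; linarith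
        exact max_eq_left this
      rw [hl0]; linarith
    · -- b k a = β/2/(1+N k a)
      have hbk : b k a = β / 2 / (1 + N k a) := hmin
      have hc : 0 < β / 2 / (1 + N k a) := by positivity
      rcases max_cases 0 (f k a - b k a) with ⟨hmax, hle2⟩ | ⟨hmax, hlt2⟩
      · have hl0 : l k a = 0 := hmax
        rw [hl0]; linarith
      · have hl0 : l k a = f k a - b k a := hmax
        have hsub := aux_sub_le_sq_div (x := f k a - fstar a) hc
        have hconv : (f k a - fstar a) ^ 2 / (4 * (β / 2 / (1 + N k a)))
            = (1 + N k a) * (f k a - fstar a) ^ 2 / (2 * β) := by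
          field_simp; ring
        rw [hl0, hbk]
        rw [hconv] at hsub
        linarith
  have hpointabs : ∀ k ∈ Finset.Icc 1 K, ∀ a,
      |f k a - fstar a| ≤ b k a + (1 + N k a) * (f k a - fstar a) ^ 2 / (2 * β) := by
    intro k hk a
    obtain ⟨hk1, hk2⟩ := Finset.mem_Icc.mp hk
    have hS : 0 < 1 + N k a := hSpos k (by omega) a
    have hf0 := (hf k hk a).1
    have hf1 := (hf k hk a).2
    have hfs0 := (hfstar a).1
    have hfs1 := (hfstar a).2
    have hRHS : 0 ≤ (1 + N k a) * (f k a - fstar a) ^ 2 / (2 * β) := by positivity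
    have habs : |f k a - fstar a| ≤ 1 := abs_le.mpr ⟨by linarith, by linarith⟩
    rcases min_cases 1 (β / 2 / (1 + N k a)) with ⟨hmin, hle⟩ | ⟨hmin, hlt⟩
    · have hbk : b k a = 1 := hmin
      rw [hbk]; linarith
    · have hbk : b k a = β / 2 / (1 + N k a) := hmin
      have hc : 0 < β / 2 / (1 + N k a) := by positivity
      have hsub := aux_sub_le_sq_div (x := |f k a - fstar a|) hc
      rw [sq_abs] at hsub
      have hconv : (f k a - fstar a) ^ 2 / (4 * (β / 2 / (1 + N k a)))
          = (1 + N k a) * (f k a - fstar a) ^ 2 / (2 * β) := by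
        field_simp; ring
      rw [hconv] at hsub
      rw [hbk]; linarith
  have hpoint1 : ∀ k ∈ Finset.Icc 1 K, ∀ a,
      fstar a - l k a ≤ 2 * b k a + (1 + N k a) * (f k a - fstar a) ^ 2 / (2 * β) := by
    intro k hk a
    have hstepA : fstar a - l k a ≤ b k a + (fstar a - f k a) := by
      rcases max_cases 0 (f k a - b k a) with ⟨hmax, hle2⟩ | ⟨hmax, hlt2⟩
      · have hl0 : l k a = 0 := hmax
        rw [hl0]; linarith
      · have hl0 : l k a = f k a - b k a := hmax
        rw [hl0]; linarith
    have hstepB : fstar a - f k a ≤ |f k a - fstar a| := by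
      rw [abs_sub_comm]; exact le_abs_self _
    have := hpointabs k hk a
    linarith
  -- per-round summed bounds
  have hsumNd : ∀ k ∈ Finset.Icc 1 K, ∀ (p : A → ℝ), (∀ a, 0 ≤ p a) → (∀ a, p a ≤ 1) →
      (∑ a, p a = 1) →
      ∑ a, p a * ((1 + N k a) * (f k a - fstar a) ^ 2 / (2 * β)) ≤ (1 + E) / (2 * β) := by
    intro k hk p hp0 hp1 hpsum
    obtain ⟨hk1, hk2⟩ := Finset.mem_Icc.mp hk
    have hstep : ∀ a, p a * ((1 + N k a) * (f k a - fstar a) ^ 2 / (2 * β))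
        ≤ (p a * (f k a - fstar a) ^ 2 + N k a * (f k a - fstar a) ^ 2) / (2 * β) := by
      intro a
      have hN := hNnonneg k (by omega) a
      have hsq := sq_nonneg (f k a - fstar a)
      have hnum : p a * ((1 + N k a) * (f k a - fstar a) ^ 2)
          ≤ p a * (f k a - fstar a) ^ 2 + N k a * (f k a - fstar a) ^ 2 := by
        nlinarith [hp0 a, hp1 a, mul_nonneg (mul_nonneg (sub_nonneg.mpr (hp1 a)) hN) hsq]
      calc p a * ((1 + N k a) * (f k a - fstar a) ^ 2 / (2 * β))
          = (p a * ((1 + N k a) * (f k a - fstar a) ^ 2)) / (2 * β) := by ring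
        _ ≤ _ := by gcongr
    calc ∑ a, p a * ((1 + N k a) * (f k a - fstar a) ^ 2 / (2 * β))
        ≤ ∑ a, (p a * (f k a - fstar a) ^ 2 + N k a * (f k a - fstar a) ^ 2) / (2 * β) :=
          Finset.sum_le_sum fun a _ => hstep a
      _ = ((∑ a, p a * (f k a - fstar a) ^ 2) + ∑ a, N k a * (f k a - fstar a) ^ 2) / (2 * β) := by
          rw [← Finset.sum_div, Finset.sum_add_distrib]
      _ ≤ (1 + E) / (2 * β) := by
          have h1 : ∑ a, p a * (f k a - fstar a) ^ 2 ≤ 1 := by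
            rw [← hpsum]
            apply Finset.sum_le_sum
            intro a _
            have hf0 := (hf k hk a).1
            have hf1 := (hf k hk a).2
            have hfs0 := (hfstar a).1
            have hfs1 := (hfstar a).2
            have hD : (f k a - fstar a) ^ 2 ≤ 1 := by nlinarith
            nlinarith [mul_le_mul_of_nonneg_left hD (hp0 a)]
          have h2 := hNErr k hk
          gcongr <;> linarith
  have hT1 : ∀ k ∈ Finset.Icc 1 K, ∑ a, π k a * (fstar a - l k a)
      ≤ 2 * (∑ a, π k a * b k a) + (1 + E) / (2 * β) := by
    intro k hk
    obtain ⟨hk1, hk2⟩ := Finset.mem_Icc.mp hk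
    have hstep : ∀ a, π k a * (fstar a - l k a)
        ≤ 2 * (π k a * b k a) + π k a * ((1 + N k a) * (f k a - fstar a) ^ 2 / (2 * β)) := by
      intro a
      have hp0 := le_of_lt (hπpos k hk1 (by omega) a)
      have h := mul_le_mul_of_nonneg_left (hpoint1 k hk a) hp0
      calc π k a * (fstar a - l k a) ≤ _ := h
        _ = 2 * (π k a * b k a) + π k a * ((1 + N k a) * (f k a - fstar a) ^ 2 / (2 * β)) := by
            ring
    calc ∑ a, π k a * (fstar a - l k a)
        ≤ ∑ a, (2 * (π k a * b k a) + π k a * ((1 + N k a) * (f k a - fstar a) ^ 2 / (2 * β))) :=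
          Finset.sum_le_sum fun a _ => hstep a
      _ = 2 * (∑ a, π k a * b k a)
          + ∑ a, π k a * ((1 + N k a) * (f k a - fstar a) ^ 2 / (2 * β)) := by
          rw [Finset.sum_add_distrib, ← Finset.mul_sum]
      _ ≤ 2 * (∑ a, π k a * b k a) + (1 + E) / (2 * β) := by
          have := hsumNd k hk (π k) (fun a => le_of_lt (hπpos k hk1 (by omega) a))
            (hπle1 k hk1 (by omega)) (hπsum k hk1 (by omega))
          linarith
  have hT2 : ∀ k ∈ Finset.Icc 1 K, ∑ a, πs a * (l k a - fstar a) ≤ (1 + E) / (2 * β) := by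
    intro k hk
    have hstep : ∀ a, πs a * (l k a - fstar a)
        ≤ πs a * ((1 + N k a) * (f k a - fstar a) ^ 2 / (2 * β)) := fun a =>
      mul_le_mul_of_nonneg_left (hpoint2 k hk a) (hπs a).1
    calc ∑ a, πs a * (l k a - fstar a)
        ≤ ∑ a, πs a * ((1 + N k a) * (f k a - fstar a) ^ 2 / (2 * β)) :=
          Finset.sum_le_sum fun a _ => hstep a
      _ ≤ (1 + E) / (2 * β) :=
          hsumNd k hk πs (fun a => (hπs a).1) (fun a => (hπs a).2) hπssum
  -- final combination
  have hdecomp : ∀ k ∈ Finset.Icc 1 K, ∑ a, (π k a - πs a) * fstar a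
      = ((∑ a, π k a * l k a) - ∑ a, πs a * l k a)
        + (∑ a, π k a * (fstar a - l k a)) + ∑ a, πs a * (l k a - fstar a) := by
    intro k hk
    rw [← Finset.sum_sub_distrib, ← Finset.sum_add_distrib, ← Finset.sum_add_distrib]
    exact Finset.sum_congr rfl fun a _ => by ring
  have hKcard : (Finset.Icc 1 K).card = K := by rw [Nat.card_Icc]; omega
  have hsplit3 : ∑ k ∈ Finset.Icc 1 K, ∑ a, (π k a - πs a) * fstar a
      = (∑ k ∈ Finset.Icc 1 K, ((∑ a, π k a * l k a) - ∑ a, πs a * l k a))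
        + (∑ k ∈ Finset.Icc 1 K, ∑ a, π k a * (fstar a - l k a))
        + ∑ k ∈ Finset.Icc 1 K, ∑ a, πs a * (l k a - fstar a) := by
    rw [← Finset.sum_add_distrib, ← Finset.sum_add_distrib]
    exact Finset.sum_congr rfl hdecomp
  have hmid : ∑ k ∈ Finset.Icc 1 K, ∑ a, π k a * (fstar a - l k a)
      ≤ 2 * (β * (Fintype.card A) * Real.log ((K:ℝ) + 1)) + K * ((1 + E) / (2 * β)) := by
    calc ∑ k ∈ Finset.Icc 1 K, ∑ a, π k a * (fstar a - l k a)
        ≤ ∑ k ∈ Finset.Icc 1 K, (2 * (∑ a, π k a * b k a) + (1 + E) / (2 * β)) :=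
          Finset.sum_le_sum hT1
      _ = 2 * (∑ k ∈ Finset.Icc 1 K, ∑ a, π k a * b k a) + K * ((1 + E) / (2 * β)) := by
          rw [Finset.sum_add_distrib, ← Finset.mul_sum, Finset.sum_const, hKcard, nsmul_eq_mul]
      _ ≤ 2 * (β * (Fintype.card A) * Real.log ((K:ℝ) + 1)) + K * ((1 + E) / (2 * β)) := by
          have := hbonus
          linarith
  have hlast : ∑ k ∈ Finset.Icc 1 K, ∑ a, πs a * (l k a - fstar a)
      ≤ K * ((1 + E) / (2 * β)) := by
    calc ∑ k ∈ Finset.Icc 1 K, ∑ a, πs a * (l k a - fstar a)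
        ≤ ∑ k ∈ Finset.Icc 1 K, (1 + E) / (2 * β) := Finset.sum_le_sum hT2
      _ = K * ((1 + E) / (2 * β)) := by
          rw [Finset.sum_const, hKcard, nsmul_eq_mul]
  have hfieldid : (K:ℝ) * ((1 + E) / (2 * β)) + K * ((1 + E) / (2 * β))
      = K / β + K * E / β := by
    field_simp
    ring
  rw [hsplit3]
  have hlogK : 0 ≤ Real.log ((K:ℝ) + 1) := Real.log_nonneg (by linarith)
  linarith [hEW, hmid, hlast]
end
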